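/- arXiv:1601.05495 — 5 statements merged into one kernel-verified Lean document; each statement's English description precedes it below -/
import Mathlib

section
/- For any nonnegative weights λ_{j,a}, with probability at least 1 − 2e³ d^{−3} over the n independent PL rankings, the gradient of the rank-breaking log-likelihood at the true parameter satisfies ‖∇L_RB(θ*)‖₂ ≤ √(6 log d · Σ_{j=1}^n Σ_{a=1}^{ℓ_j} λ_{j,a}² (κ_j − p_{j,a})(κ_j − p_{j,a} + 1)). -/
/-!
A Plackett–Luce ranking of `S` is its first item `s`, drawn with probability proportional to
`exp (θ s)`, followed by a Plackett–Luce ranking of `S \ {s}`. Peeling off `s`, the separator at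
the top contributes a vector of mean zero (over the choice of `s`) and squared norm at most
`(κ - 1) κ`, while every other separator moves up one position. So the gradient is a sum of
bounded vector-martingale increments, and Pinelis' one-step inequality
`E cosh (t ‖x + v‖) ≤ cosh (t ‖x‖) exp (t² c² / 2)` iterates, over the items and then over the
independent users, to `E cosh (t ‖∇L‖) ≤ exp (t² V / 2)` with `V` the variance term of the
statement. Markov's inequality at `t = A / V` gives `P (‖∇L‖ > A) ≤ 2 exp (-A² / (2 V))`, which
is `2 d⁻³` for `A² = 6 V log d`.
-/

open Real

noncomputable section

/- A ranking of a finite set `S`: a bijection from positions `Fin S.card`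
(position `0` is the highest rank) to the elements of `S`. -/
abbrev Ranking {ι : Type*} [DecidableEq ι] (S : Finset ι) := Fin S.card ≃ {x // x ∈ S}

/- The Plackett–Luce probability of observing the ranking `σ` of the set `S`,
under parameter `θ`. -/
noncomputable def PLProb {ι : Type*} [DecidableEq ι] (θ : ι → ℝ) (S : Finset ι)
    (σ : Ranking S) : ℝ :=
  ∏ a : Fin S.card,
    (Real.exp (θ (σ a).1) /
      ∑ a' ∈ Finset.univ.filter (fun a' => a ≤ a'), Real.exp (θ (σ a').1))

/- The (1-based) position at which item `i` is ranked by `σ`. -/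
def rankOf {ι : Type*} [DecidableEq ι] {S : Finset ι} (σ : Ranking S)
    (i : {x // x ∈ S}) : ℕ := (σ.symm i).val + 1

/- Probability of an event under the PL model for a single ranking of `S`. -/
open Classical in
noncomputable def PLprobEvent {ι : Type*} [DecidableEq ι] (θ : ι → ℝ) (S : Finset ι)
    (E : Ranking S → Prop) : ℝ :=
  ∑ σ : Ranking S, if E σ then PLProb θ S σ else 0

/- Probability of an event for `n` independent PL rankings of fixed offer sets. -/
open Classical in
noncomputable def jointProb {d n : ℕ} (θ : Fin d → ℝ) (S : Fin n → Finset (Fin d))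
    (E : (∀ j, Ranking (S j)) → Prop) : ℝ :=
  ∑ σ : (∀ j, Ranking (S j)), if E σ then ∏ j, PLProb θ (S j) (σ j) else 0

/- The parameter space `Ω_b`. -/
def OmegaB {d : ℕ} (b : ℝ) (θ : Fin d → ℝ) : Prop :=
  (∑ i, θ i) = 0 ∧ ∀ i, |θ i| ≤ b

/- Contribution to the rank-breaking log-likelihood from the separator at
(1-based) position `p` of the ranking `σ`. -/
open Classical in
noncomputable def rbTerm {d : ℕ} (θ : Fin d → ℝ) {S : Finset (Fin d)} (σ : Ranking S)
    (p : ℕ) : ℝ :=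
  ∑ i ∈ S.attach, ∑ i' ∈ S.attach,
    if rankOf σ i' = p ∧ p < rankOf σ i then
      θ i'.1 - Real.log (Real.exp (θ i.1) + Real.exp (θ i'.1))
    else 0

/- The rank-breaking log-likelihood. -/
noncomputable def LRB {d n : ℕ} (S : Fin n → Finset (Fin d)) (ℓ : Fin n → ℕ)
    (p : (j : Fin n) → Fin (ℓ j) → ℕ) (lam : (j : Fin n) → Fin (ℓ j) → ℝ)
    (σ : ∀ j, Ranking (S j)) (θ : Fin d → ℝ) : ℝ :=
  ∑ j, ∑ a, lam j a * rbTerm θ (σ j) (p j a)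

/- The rank-one matrix `(e_i - e_{i'}) (e_i - e_{i'})ᵀ`. -/
noncomputable def pairMatrix {d : ℕ} (i i' : Fin d) : Matrix (Fin d) (Fin d) ℝ :=
  Matrix.vecMulVec (Pi.single i 1 - Pi.single i' 1) (Pi.single i 1 - Pi.single i' 1)

/- Weighted comparison-graph Laplacian `Σ_j w_j Σ_{i<i' ∈ S_j} (e_i-e_{i'})(e_i-e_{i'})ᵀ`. -/
open Classical in
noncomputable def graphLaplacian {d n : ℕ} (S : Fin n → Finset (Fin d)) (w : Fin n → ℝ) :
    Matrix (Fin d) (Fin d) ℝ :=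
  ∑ j, w j • ∑ i ∈ S j, ∑ i' ∈ S j, if i < i' then pairMatrix i i' else 0

/- The eigenvalues of a Hermitian matrix, sorted in increasing order. -/
noncomputable def sortedEig {d : ℕ} {M : Matrix (Fin d) (Fin d) ℝ} (hM : M.IsHermitian) :
    Fin d → ℝ :=
  hM.eigenvalues ∘ Tuple.sort hM.eigenvalues

/- Euclidean norm of a vector in `ℝ^m`. -/
noncomputable def l2norm {m : ℕ} (v : Fin m → ℝ) : ℝ := Real.sqrt (∑ i, (v i) ^ 2)

end

/- The gradient of the rank-breaking log-likelihood at θ, coordinate i. -/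
open Classical in
noncomputable def gradLRB {d n : ℕ} (S : Fin n → Finset (Fin d)) (ℓ : Fin n → ℕ)
    (p : (j : Fin n) → Fin (ℓ j) → ℕ) (lam : (j : Fin n) → Fin (ℓ j) → ℝ)
    (θ : Fin d → ℝ) (σ : ∀ j, Ranking (S j)) (i : Fin d) : ℝ :=
  ∑ j, ∑ a, ∑ i0 ∈ (S j).attach, ∑ i0' ∈ (S j).attach,
    if i0.1 = i ∧ i0'.1 ≠ i ∧
        ((rankOf (σ j) i0' = p j a ∧ p j a < rankOf (σ j) i0) ∨
         (rankOf (σ j) i0 = p j a ∧ p j a < rankOf (σ j) i0')) then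
      lam j a * ((if rankOf (σ j) i0 < rankOf (σ j) i0' then (1 : ℝ) else 0) -
        Real.exp (θ i0.1) / (Real.exp (θ i0.1) + Real.exp (θ i0'.1)))
    else 0

open Finset

noncomputable section

lemma sinh_le_mul_cosh {w : ℝ} (hw : 0 ≤ w) : sinh w ≤ w * cosh w := by
  rcases hw.eq_or_lt with rfl | hw
  · simp
  obtain ⟨ξ, hξ, hslope⟩ := exists_hasDerivAt_eq_slope sinh cosh hw
    continuous_sinh.continuousOn fun x _ => hasDerivAt_sinh x
  rw [sinh_zero, sub_zero, sub_zero, eq_div_iff hw.ne'] at hslope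
  have : cosh ξ ≤ cosh w := cosh_le_cosh.2 (by simpa [abs_of_pos hξ.1, abs_of_pos hw] using hξ.2.le)
  nlinarith

lemma convexOn_cosh_mul_sqrt {t : ℝ} (ht : 0 ≤ t) :
    ConvexOn ℝ (Set.Ici 0) fun z => cosh (t * √z) := by
  refine convexOn_of_hasDerivWithinAt2_nonneg (convex_Ici 0)
    (f' := fun z => t * sinh (t * √z) / (2 * √z))
    (f'' := fun z => t / (4 * z * √z) * (t * √z * cosh (t * √z) - sinh (t * √z)))
    (by fun_prop) (fun z hz => ?_) (fun z hz => ?_) (fun z hz => ?_) <;>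
    rw [interior_Ici, Set.mem_Ioi] at hz <;> have hs : 0 < √z := sqrt_pos.2 hz
  · refine (((hasDerivAt_sqrt hz.ne').const_mul t).cosh.congr_deriv ?_).hasDerivWithinAt
    field_simp
  · refine ((((hasDerivAt_sqrt hz.ne').const_mul t).sinh.const_mul t).div
      ((hasDerivAt_sqrt hz.ne').const_mul 2) (by positivity)).hasDerivWithinAt.congr_deriv ?_
    field_simp
    rw [sq_sqrt hz.le]
    ring
  · exact mul_nonneg (by positivity) (sub_nonneg.2 (sinh_le_mul_cosh (by positivity)))

lemma cosh_mul_le_cosh_mul {t a b : ℝ} (ht : 0 ≤ t) (ha : 0 ≤ a) (hab : a ≤ b) :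
    cosh (t * a) ≤ cosh (t * b) := by
  rw [cosh_le_cosh, abs_of_nonneg (by positivity), abs_of_nonneg (by nlinarith)]
  exact mul_le_mul_of_nonneg_left hab ht

/-- On `[(r - c)², (r + c)²]` the convex function `z ↦ cosh (t √z)` lies below its chord,
whose midpoint value is `cosh (t r) cosh (t c)`. If `r c = 0` then `u = 0`, so the junk value of
the slope for `r c = 0` does not matter. -/
lemma cosh_mul_sqrt_le_chord {t r c u : ℝ} (ht : 0 ≤ t) (hr : 0 ≤ r) (hc : 0 ≤ c)
    (hu : |u| ≤ 2 * r * c) :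
    cosh (t * √(r ^ 2 + c ^ 2 + u)) ≤
      cosh (t * r) * cosh (t * c) + u * (sinh (t * r) * sinh (t * c) / (2 * r * c)) := by
  rcases (mul_nonneg hr hc).eq_or_lt with hrc | hrc
  · have hu0 : u = 0 := abs_nonpos_iff.1 (by linarith)
    have hsinh : sinh (t * r) * sinh (t * c) = 0 := by
      rcases mul_eq_zero.1 hrc.symm with h | h <;> simp [h]
    calc cosh (t * √(r ^ 2 + c ^ 2 + u)) ≤ cosh (t * (r + c)) :=
          cosh_mul_le_cosh_mul ht (sqrt_nonneg _) (sqrt_le_iff.2 ⟨by positivity, by nlinarith⟩)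
      _ = _ := by rw [mul_add, cosh_add, hsinh, hu0]; ring
  obtain ⟨hu₁, hu₂⟩ := abs_le.1 hu
  have hr0 : r ≠ 0 := by rintro rfl; simp at hrc
  have hc0 : c ≠ 0 := by rintro rfl; simp at hrc
  set a := (2 * r * c - u) / (4 * r * c)
  set b := (2 * r * c + u) / (4 * r * c)
  have ha : 0 ≤ a := div_nonneg (by linarith) (by positivity)
  have hb : 0 ≤ b := div_nonneg (by linarith) (by positivity)
  have hab : a + b = 1 := by simp only [a, b]; field_simp; ring
  have hmix : a * (r - c) ^ 2 + b * (r + c) ^ 2 = r ^ 2 + c ^ 2 + u := by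
    simp only [a, b]; field_simp; ring
  have hcosh : cosh (t * √((r - c) ^ 2)) = cosh (t * (r - c)) := by
    rw [sqrt_sq_eq_abs, ← cosh_abs, abs_mul, abs_abs, ← abs_mul, cosh_abs]
  have key := (convexOn_cosh_mul_sqrt ht).2 (Set.mem_Ici.2 (sq_nonneg (r - c)))
    (Set.mem_Ici.2 (sq_nonneg (r + c))) ha hb hab
  simp only [smul_eq_mul] at key
  rw [hmix, hcosh, sqrt_sq (add_nonneg hr hc)] at key
  refine key.trans_eq ?_
  simp only [a, b, mul_sub, mul_add, cosh_sub, cosh_add]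
  field_simp
  ring

section CoshBound

variable {Ω E : Type*} [Fintype Ω] [NormedAddCommGroup E]

/-- `X` has law `w`. Quantifying over the starting point `x` is what lets the bound be iterated
along a martingale, see `HasCoshBound.sigma`. -/
def HasCoshBound (w : Ω → ℝ) (X : Ω → E) (V : ℝ) : Prop :=
  ∀ t, 0 ≤ t → ∀ x : E, ∑ ω, w ω * cosh (t * ‖x + X ω‖) ≤ cosh (t * ‖x‖) * exp (t ^ 2 / 2 * V)

lemma HasCoshBound.of_equiv {Ω' : Type*} [Fintype Ω'] {w : Ω → ℝ} {X : Ω → E} {w' : Ω' → ℝ}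
    {X' : Ω' → E} {V : ℝ} (e : Ω' ≃ Ω) (h : HasCoshBound w' X' V)
    (hw : ∀ ω, w (e ω) = w' ω) (hX : ∀ ω, X (e ω) = X' ω) : HasCoshBound w X V := by
  intro t ht x
  rw [← e.sum_comp]
  simpa only [hw, hX] using h t ht x

lemma HasCoshBound.sigma {α : Type*} {β : α → Type*} [Fintype α] [∀ a, Fintype (β a)]
    {q : α → ℝ} {v : α → E} {w : ∀ a, β a → ℝ} {Y : ∀ a, β a → E} {V₁ V₂ : ℝ}
    (hq : ∀ a, 0 ≤ q a) (hv : HasCoshBound q v V₁) (hY : ∀ a, HasCoshBound (w a) (Y a) V₂) :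
    HasCoshBound (fun ω : (a : α) × β a => q ω.1 * w ω.1 ω.2) (fun ω => v ω.1 + Y ω.1 ω.2)
      (V₁ + V₂) := by
  intro t ht x
  calc ∑ ω : (a : α) × β a, q ω.1 * w ω.1 ω.2 * cosh (t * ‖x + (v ω.1 + Y ω.1 ω.2)‖)
      = ∑ a, q a * ∑ b, w a b * cosh (t * ‖(x + v a) + Y a b‖) := by
        rw [Fintype.sum_sigma]
        simp only [mul_sum, mul_assoc, add_assoc]
    _ ≤ ∑ a, q a * (cosh (t * ‖x + v a‖) * exp (t ^ 2 / 2 * V₂)) :=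
        sum_le_sum fun a _ => mul_le_mul_of_nonneg_left (hY a t ht _) (hq a)
    _ = (∑ a, q a * cosh (t * ‖x + v a‖)) * exp (t ^ 2 / 2 * V₂) := by
        simp only [sum_mul, mul_assoc]
    _ ≤ cosh (t * ‖x‖) * exp (t ^ 2 / 2 * V₁) * exp (t ^ 2 / 2 * V₂) :=
        mul_le_mul_of_nonneg_right (hv t ht x) (exp_nonneg _)
    _ = cosh (t * ‖x‖) * exp (t ^ 2 / 2 * (V₁ + V₂)) := by
        rw [mul_add, exp_add, mul_assoc]

lemma HasCoshBound.prod {α β : Type*} [Fintype α] [Fintype β] {q : α → ℝ} {v : α → E}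
    {w : β → ℝ} {Y : β → E} {V₁ V₂ : ℝ} (hq : ∀ a, 0 ≤ q a) (hv : HasCoshBound q v V₁)
    (hY : HasCoshBound w Y V₂) :
    HasCoshBound (fun ω : α × β => q ω.1 * w ω.2) (fun ω => v ω.1 + Y ω.2) (V₁ + V₂) :=
  (hv.sigma (β := fun _ => β) hq fun _ => hY).of_equiv (Equiv.sigmaEquivProd α β)
    (fun _ => rfl) (fun _ => rfl)

lemma HasCoshBound.pi {n : ℕ} {α : Fin n → Type*} [∀ j, Fintype (α j)] {w : ∀ j, α j → ℝ}
    {X : ∀ j, α j → E} {V : Fin n → ℝ} (hw : ∀ j ω, 0 ≤ w j ω)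
    (h : ∀ j, HasCoshBound (w j) (X j) (V j)) :
    HasCoshBound (fun ω : ∀ j, α j => ∏ j, w j (ω j)) (fun ω => ∑ j, X j (ω j)) (∑ j, V j) := by
  induction n with
  | zero => intro t ht x; simp
  | succ n ih =>
    rw [Fin.sum_univ_succ]
    refine ((h 0).prod (hw 0) (ih (fun j => hw j.succ) fun j => h j.succ)).of_equiv
      (Fin.consEquiv α) (fun ω => ?_) (fun ω => ?_)
    · simp [Fin.prod_univ_succ]
    · simp [Fin.sum_univ_succ]

lemma HasCoshBound.sum_filter_lt_norm_le {w : Ω → ℝ} {X : Ω → E} {V A : ℝ}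
    (hw : ∀ ω, 0 ≤ w ω) (h : HasCoshBound w X V) (hV : 0 < V) (hA : 0 ≤ A) :
    ∑ ω with A < ‖X ω‖, w ω ≤ 2 * exp (-(A ^ 2 / (2 * V))) := by
  set t := A / V with ht_def
  have ht : 0 ≤ t := div_nonneg hA hV.le
  have hmarkov : (∑ ω with A < ‖X ω‖, w ω) * cosh (t * A) ≤ exp (t ^ 2 / 2 * V) := by
    calc (∑ ω with A < ‖X ω‖, w ω) * cosh (t * A)
        ≤ ∑ ω with A < ‖X ω‖, w ω * cosh (t * ‖X ω‖) := by
          rw [sum_mul]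
          exact sum_le_sum fun ω hω => mul_le_mul_of_nonneg_left
            (cosh_mul_le_cosh_mul ht hA (mem_filter.1 hω).2.le) (hw ω)
      _ ≤ ∑ ω, w ω * cosh (t * ‖X ω‖) :=
          sum_le_sum_of_subset_of_nonneg (filter_subset _ _)
            fun ω _ _ => mul_nonneg (hw ω) (cosh_pos _).le
      _ ≤ exp (t ^ 2 / 2 * V) := by simpa using h t ht 0
  have hcosh : exp (t * A) / 2 ≤ cosh (t * A) := by
    rw [cosh_eq]; linarith [exp_pos (-(t * A))]
  calc ∑ ω with A < ‖X ω‖, w ω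
      ≤ exp (t ^ 2 / 2 * V) / (exp (t * A) / 2) := by
        rw [le_div_iff₀ (by positivity)]
        exact (mul_le_mul_of_nonneg_left hcosh (sum_nonneg fun ω _ => hw ω)).trans hmarkov
    _ = 2 * exp (-(A ^ 2 / (2 * V))) := by
        rw [div_div_eq_mul_div, mul_comm, mul_div_assoc, ← exp_sub]
        congr 2
        rw [ht_def]
        field_simp
        ring

lemma HasCoshBound.sum_filter_lt_norm_eq_zero {w : Ω → ℝ} {X : Ω → E}
    (hw : ∀ ω, 0 ≤ w ω) (hw1 : ∑ ω, w ω = 1) (h : HasCoshBound w X 0) :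
    ∑ ω with 0 < ‖X ω‖, w ω = 0 := by
  have hnonneg (ω : Ω) : 0 ≤ w ω * (cosh ‖X ω‖ - 1) :=
    mul_nonneg (hw ω) (sub_nonneg.2 (one_le_cosh _))
  have hterms : ∑ ω, w ω * (cosh ‖X ω‖ - 1) = 0 :=
    le_antisymm (by simpa [mul_sub, hw1] using h 1 zero_le_one 0) (sum_nonneg fun ω _ => hnonneg ω)
  refine sum_eq_zero fun ω hω => ?_
  have := (sum_eq_zero_iff_of_nonneg fun ω _ => hnonneg ω).1 hterms ω (mem_univ ω)
  have hlt : 1 < cosh ‖X ω‖ := one_lt_cosh.2 (mem_filter.1 hω).2.ne'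
  nlinarith

theorem HasCoshBound.one_sub_le_sum_norm_le {w : Ω → ℝ} {X : Ω → E} {V c : ℝ}
    (hw : ∀ ω, 0 ≤ w ω) (hw1 : ∑ ω, w ω = 1) (h : HasCoshBound w X V) (hV : 0 ≤ V)
    (hc : 0 ≤ c) : 1 - 2 * exp (-(c / 2)) ≤ ∑ ω with ‖X ω‖ ≤ √(c * V), w ω := by
  have hsplit := sum_filter_add_sum_filter_not univ (fun ω => ‖X ω‖ ≤ √(c * V)) w
  simp only [not_le, hw1] at hsplit
  suffices ∑ ω with √(c * V) < ‖X ω‖, w ω ≤ 2 * exp (-(c / 2)) by linarith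
  rcases hV.eq_or_lt with rfl | hV
  · rw [mul_zero, sqrt_zero, h.sum_filter_lt_norm_eq_zero hw hw1]
    positivity
  · refine (h.sum_filter_lt_norm_le hw hV (sqrt_nonneg _)).trans_eq ?_
    rw [sq_sqrt (by positivity)]
    field_simp

variable [InnerProductSpace ℝ E]

/-- Pinelis' inequality for one step of a bounded vector martingale. -/
theorem hasCoshBound_of_sum_smul_eq_zero {w : Ω → ℝ} {X : Ω → E} {c : ℝ}
    (hw : ∀ ω, 0 ≤ w ω) (hw1 : ∑ ω, w ω = 1) (hmean : ∑ ω, w ω • X ω = 0)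
    (hX : ∀ ω, ‖X ω‖ ≤ c) : HasCoshBound w X (c ^ 2) := by
  intro t ht x
  have hc : 0 ≤ c := by
    obtain ⟨ω⟩ : Nonempty Ω := by
      by_contra h
      simp [not_nonempty_iff.1 h] at hw1
    exact (norm_nonneg _).trans (hX ω)
  set r := ‖x‖
  set K := sinh (t * r) * sinh (t * c) / (2 * r * c)
  have hpoint : ∀ ω, cosh (t * ‖x + X ω‖) ≤
      cosh (t * r) * cosh (t * c) + 2 * inner ℝ x (X ω) * K := by
    intro ω
    have hinner : |2 * inner ℝ x (X ω)| ≤ 2 * r * c := by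
      rw [abs_mul, abs_two, mul_assoc]
      gcongr
      exact (abs_real_inner_le_norm _ _).trans (by gcongr; exact hX ω)
    refine (cosh_mul_le_cosh_mul ht (norm_nonneg _) ?_).trans
      (cosh_mul_sqrt_le_chord ht (norm_nonneg x) hc hinner)
    refine le_sqrt_of_sq_le ?_
    rw [norm_add_sq_real]
    nlinarith [hX ω, norm_nonneg (X ω)]
  have hcancel : ∑ ω, w ω * inner ℝ x (X ω) = 0 := by
    simp_rw [← real_inner_smul_right, ← inner_sum, hmean, inner_zero_right]
  calc ∑ ω, w ω * cosh (t * ‖x + X ω‖)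
      ≤ ∑ ω, w ω * (cosh (t * r) * cosh (t * c) + 2 * inner ℝ x (X ω) * K) :=
        sum_le_sum fun ω _ => mul_le_mul_of_nonneg_left (hpoint ω) (hw ω)
    _ = cosh (t * r) * cosh (t * c) := by
        simp only [mul_add, sum_add_distrib, ← sum_mul, hw1]
        rw [show ∑ ω, w ω * (2 * inner ℝ x (X ω) * K) = 2 * K * ∑ ω, w ω * inner ℝ x (X ω) by
          rw [mul_sum]; exact sum_congr rfl fun _ _ => by ring, hcancel]
        ring
    _ ≤ cosh (t * r) * exp (t ^ 2 / 2 * c ^ 2) := by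
        gcongr
        exact (cosh_le_exp_half_sq _).trans_eq (by ring_nf)

end CoshBound


section Preferences

variable {ι : Type*} (θ : ι → ℝ)

def firstProb (S : Finset ι) (s : ι) : ℝ := exp (θ s) / ∑ x ∈ S, exp (θ x)

lemma firstProb_nonneg (S : Finset ι) (s : ι) : 0 ≤ firstProb θ S s :=
  div_nonneg (exp_pos _).le (sum_nonneg fun _ _ => (exp_pos _).le)

lemma sum_firstProb {S : Finset ι} (hS : S.Nonempty) : ∑ s ∈ S, firstProb θ S s = 1 := by
  simp only [firstProb]
  rw [← sum_div, div_self (sum_pos (fun _ _ => exp_pos _) hS).ne']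

def winProb (x y : ι) : ℝ := exp (θ x) / (exp (θ x) + exp (θ y))

lemma winProb_nonneg (x y : ι) : 0 ≤ winProb θ x y := by unfold winProb; positivity

lemma winProb_le_one (x y : ι) : winProb θ x y ≤ 1 :=
  div_le_one_of_le₀ (le_add_of_nonneg_right (exp_pos _).le) (by positivity)

lemma one_sub_winProb (x y : ι) : 1 - winProb θ x y = winProb θ y x := by
  unfold winProb
  field_simp
  ring

lemma firstProb_mul_winProb (S : Finset ι) (x y : ι) :
    firstProb θ S y * winProb θ x y = firstProb θ S x * winProb θ y x := by
  unfold firstProb winProb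
  rw [add_comm (exp (θ y))]
  ring

end Preferences

section Rankings

variable {ι : Type*} [DecidableEq ι] {S : Finset ι}

def rankFn (σ : Ranking S) (x : ι) : ℕ := if h : x ∈ S then rankOf σ ⟨x, h⟩ else 0

lemma rankFn_coe (σ : Ranking S) (x : S) : rankFn σ x = rankOf σ x := by
  simp [rankFn]

lemma rankFn_of_notMem (σ : Ranking S) {x : ι} (hx : x ∉ S) : rankFn σ x = 0 := by
  simp [rankFn, hx]

lemma rankFn_pos_iff (σ : Ranking S) {x : ι} : 0 < rankFn σ x ↔ x ∈ S := by
  by_cases hx : x ∈ S <;> simp [rankFn, rankOf, hx]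

lemma rankFn_injective : Function.Injective (rankFn (S := S)) := by
  intro σ τ h
  suffices σ.symm = τ.symm by simpa using congrArg Equiv.symm this
  ext x
  simpa [rankFn_coe, rankOf] using congrFun h x

def subtypeEraseEquiv (s : S) : {x // x ∈ S.erase s.1} ≃ {y : S // y ≠ s} where
  toFun x := ⟨⟨x, mem_of_mem_erase x.2⟩, fun h => ne_of_mem_erase x.2 (congrArg Subtype.val h)⟩
  invFun y := ⟨y.1, mem_erase.2 ⟨fun h => y.2 (Subtype.ext h), y.1.2⟩⟩

/-- The ranking of `S` that puts `s` first, followed by `σ'`. -/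
def consRank (s : S) (σ' : Ranking (S.erase s)) : Ranking S :=
  (finCongr (card_erase_add_one s.2).symm).trans <| (finSuccEquiv _).trans <|
    σ'.optionCongr.trans <| (subtypeEraseEquiv s).optionCongr.trans (Equiv.optionSubtypeNe s)

lemma rankFn_consRank_self (s : S) (σ' : Ranking (S.erase s)) :
    rankFn (consRank s σ') s = 1 := by
  simp [rankFn, rankOf, consRank, ← Equiv.optionCongr_symm]

lemma rankFn_consRank_of_mem_erase (s : S) (σ' : Ranking (S.erase s)) {x : ι}
    (hx : x ∈ S.erase s) : rankFn (consRank s σ') x = rankFn σ' x + 1 := by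
  obtain ⟨hxs, hxS⟩ := mem_erase.1 hx
  have hne : (⟨x, hxS⟩ : S) ≠ s := fun h => hxs (congrArg Subtype.val h)
  simp [rankFn, rankOf, consRank, hx, hxS, Equiv.optionSubtypeNe_symm_of_ne hne,
    ← Equiv.optionCongr_symm]
  rfl

lemma consRank_injective :
    Function.Injective fun σ : (s : S) × Ranking (S.erase s) => consRank σ.1 σ.2 := by
  rintro ⟨s, σ'⟩ ⟨u, τ'⟩ h
  have hrank := congrArg rankFn h
  obtain rfl : s = u := by
    by_contra hsu
    have hs : s.1 ∈ S.erase u := mem_erase.2 ⟨Subtype.val_injective.ne hsu, s.2⟩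
    have := congrFun hrank s
    simp only [rankFn_consRank_self, rankFn_consRank_of_mem_erase u τ' hs] at this
    have := (rankFn_pos_iff τ').2 hs
    omega
  suffices σ' = τ' by rw [this]
  refine rankFn_injective (funext fun x => ?_)
  by_cases hx : x ∈ S.erase s
  · simpa [rankFn_consRank_of_mem_erase _ _ hx] using congrFun hrank x
  · rw [rankFn_of_notMem _ hx, rankFn_of_notMem _ hx]

lemma card_ranking (S : Finset ι) : Fintype.card (Ranking S) = S.card.factorial := by
  rw [Fintype.card_equiv (S.equivFin.symm), Fintype.card_fin]

def rankingSigmaEquiv (hS : S.Nonempty) : ((s : S) × Ranking (S.erase s)) ≃ Ranking S :=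
  Equiv.ofBijective _ <| (Fintype.bijective_iff_injective_and_card _).2 ⟨consRank_injective, by
    simp only [Fintype.card_sigma, card_ranking, card_erase_of_mem, coe_mem, sum_const, card_univ,
      Fintype.card_coe, smul_eq_mul]
    exact Nat.mul_factorial_pred hS.card_pos.ne'⟩

lemma rankingSigmaEquiv_apply (hS : S.Nonempty) (σ : (s : S) × Ranking (S.erase s)) :
    rankingSigmaEquiv hS σ = consRank σ.1 σ.2 := rfl

variable (θ : ι → ℝ)

lemma PLProb_nonneg (σ : Ranking S) : 0 ≤ PLProb θ S σ :=
  prod_nonneg fun _ _ => div_nonneg (exp_pos _).le (sum_nonneg fun _ _ => (exp_pos _).le)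

lemma PLProb_eq_prod (σ : Ranking S) :
    PLProb θ S σ = ∏ x ∈ S, exp (θ x) / ∑ y ∈ S with rankFn σ x ≤ rankFn σ y, exp (θ y) := by
  rw [PLProb, ← σ.symm.prod_comp, ← prod_coe_sort S]
  refine prod_congr rfl fun x _ => ?_
  simp only [Equiv.apply_symm_apply]
  congr 1
  rw [sum_filter, sum_filter, ← sum_coe_sort S, ← σ.sum_comp]
  refine sum_congr rfl fun a _ => ?_
  simp only [rankFn_coe, rankOf, Equiv.symm_apply_apply, add_le_add_iff_right, Fin.val_fin_le]

lemma PLProb_consRank (s : S) (σ' : Ranking (S.erase s)) :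
    PLProb θ S (consRank s σ') = firstProb θ S s * PLProb θ (S.erase s) σ' := by
  rw [PLProb_eq_prod, PLProb_eq_prod, ← mul_prod_erase S _ s.2]
  congr 1
  · rw [firstProb, filter_true_of_mem fun y hy => ?_]
    rw [rankFn_consRank_self]
    exact (rankFn_pos_iff _).2 hy
  · refine prod_congr rfl fun x hx => ?_
    have hxpos := (rankFn_pos_iff σ').2 hx
    congr 2
    ext y
    simp only [mem_filter, mem_erase, rankFn_consRank_of_mem_erase s σ' hx]
    by_cases hys : y = s
    · subst hys
      simp only [rankFn_consRank_self, ne_eq, not_true_eq_false, false_and, iff_false]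
      omega
    by_cases hy : y ∈ S
    · simp [rankFn_consRank_of_mem_erase s σ' (mem_erase.2 ⟨hys, hy⟩), hys, hy]
    · simp [hy]

lemma sum_PLProb (S : Finset ι) : ∑ σ : Ranking S, PLProb θ S σ = 1 := by
  induction S using Finset.strongInduction with
  | H S ih =>
    obtain rfl | hS := S.eq_empty_or_nonempty
    · have : IsEmpty (Fin (∅ : Finset ι).card) := inferInstanceAs (IsEmpty (Fin 0))
      simp only [PLProb, univ_eq_empty, prod_empty, sum_const, card_univ, card_ranking]
      simp
    rw [← (rankingSigmaEquiv hS).sum_comp, Fintype.sum_sigma]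
    simp only [rankingSigmaEquiv_apply, PLProb_consRank, ← mul_sum,
      ih _ (erase_ssubset (Subtype.prop _)), mul_one, sum_coe_sort S (firstProb θ S),
      sum_firstProb θ hS]

lemma sum_prod_PLProb {κ : Type*} [Fintype κ] [DecidableEq κ] (S : κ → Finset ι) :
    ∑ σ : ∀ j, Ranking (S j), ∏ j, PLProb θ (S j) (σ j) = 1 := by
  rw [← Fintype.piFinset_univ, ← prod_univ_sum]
  exact prod_eq_one fun j _ => sum_PLProb θ (S j)

end Rankings

section PositionWeights

/-- Separator weights `lam` at positions `p`, re-indexed by position; indexing by position makes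
the recursion on the first-ranked item uniform in the separators (`rankGrad_consRank`). -/
def posWeight {m : ℕ} (p : Fin m → ℕ) (lam : Fin m → ℝ) (q : ℕ) : ℝ := ∑ a with p a = q, lam a

lemma sum_range_posWeight_smul {M : Type*} [AddCommMonoid M] [Module ℝ M] {m k : ℕ}
    {p : Fin m → ℕ} (lam : Fin m → ℝ) (hp : ∀ a, 1 ≤ p a ∧ p a ≤ k) (f : ℕ → M) :
    ∑ q ∈ range k, posWeight p lam (q + 1) • f (q + 1) = ∑ a, lam a • f (p a) := by
  simp only [posWeight, sum_filter, sum_smul, ite_smul, zero_smul]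
  rw [sum_comm]
  refine sum_congr rfl fun a _ => ?_
  have := hp a
  rw [sum_eq_single_of_mem (p a - 1) (mem_range.2 (by omega)) fun q _ hq => if_neg (by omega),
    if_pos (by omega), Nat.sub_add_cancel (hp a).1]

lemma posWeight_sq {m : ℕ} {p : Fin m → ℕ} (hp : Function.Injective p) (lam : Fin m → ℝ)
    (q : ℕ) : posWeight p lam q ^ 2 = posWeight p (fun a => lam a ^ 2) q := by
  by_cases h : ∃ a, p a = q
  · obtain ⟨a, rfl⟩ := h
    have : ({b | p b = p a} : Finset (Fin m)) = {a} := by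
      ext b
      simp [hp.eq_iff]
    simp [posWeight, this]
  · have : ({b | p b = q} : Finset (Fin m)) = ∅ := filter_eq_empty_iff.2 fun b _ hb => h ⟨b, hb⟩
    simp [posWeight, this]

/-- After `q` items have been peeled off, `(k - (q + 1)) (k - (q + 1) + 1)` bounds the squared
norm of the top separator's gradient (`norm_topGrad_sq_le`). -/
def sepVar (w : ℕ → ℝ) (k : ℕ) : ℝ :=
  ∑ q ∈ range k, w (q + 1) ^ 2 * ((k : ℝ) - (q + 1 : ℕ)) * ((k : ℝ) - (q + 1 : ℕ) + 1)

lemma sepVar_succ (w : ℕ → ℝ) (k : ℕ) :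
    sepVar w (k + 1) = w 1 ^ 2 * (k * (k + 1)) + sepVar (fun q => w (q + 1)) k := by
  rw [sepVar, sum_range_succ', add_comm, sepVar]
  push_cast
  congr 1
  · ring
  · exact sum_congr rfl fun q _ => by ring

lemma sepVar_posWeight {m k : ℕ} {p : Fin m → ℕ} (hinj : Function.Injective p)
    (hp : ∀ a, 1 ≤ p a ∧ p a ≤ k) (lam : Fin m → ℝ) :
    sepVar (posWeight p lam) k = ∑ a, lam a ^ 2 * ((k : ℝ) - p a) * ((k : ℝ) - p a + 1) := by
  simp only [sepVar, posWeight_sq hinj, mul_assoc]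
  exact sum_range_posWeight_smul (fun a => lam a ^ 2) hp fun n => ((k : ℝ) - n) * ((k : ℝ) - n + 1)

end PositionWeights

section Gradients

variable {ι : Type*} [DecidableEq ι] (θ : ι → ℝ)

def topGrad (S : Finset ι) (s : ι) : EuclideanSpace ℝ ι :=
  ∑ x ∈ S.erase s, winProb θ x s • (EuclideanSpace.single s 1 - EuclideanSpace.single x 1)

lemma sum_firstProb_smul_topGrad (S : Finset ι) :
    ∑ s ∈ S, firstProb θ S s • topGrad θ S s = 0 := by
  set k : ι → ι → ℝ := fun s x => firstProb θ S s * winProb θ x s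
  set e : ι → EuclideanSpace ℝ ι := fun x => EuclideanSpace.single x 1
  have hT : ∑ s ∈ S, firstProb θ S s • topGrad θ S s = ∑ s ∈ S, ∑ x ∈ S, k s x • (e s - e x) := by
    refine sum_congr rfl fun s _ => ?_
    rw [topGrad, sum_erase _ (by simp), smul_sum]
    simp only [smul_smul, k, e]
  -- `k` is symmetric (`firstProb_mul_winProb`), so the double sum is antisymmetric.
  have hsymm : ∑ s ∈ S, ∑ x ∈ S, k s x • (e s - e x) =
      -∑ s ∈ S, ∑ x ∈ S, k s x • (e s - e x) := by
    conv_lhs => rw [sum_comm]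
    rw [← sum_neg_distrib]
    refine sum_congr rfl fun x _ => ?_
    rw [← sum_neg_distrib]
    refine sum_congr rfl fun s _ => ?_
    rw [← smul_neg, neg_sub]
    simp only [k, firstProb_mul_winProb]
  rw [hT]
  have h2 : (2 : ℝ) • ∑ s ∈ S, ∑ x ∈ S, k s x • (e s - e x) = 0 := by
    rw [two_smul]
    nth_rewrite 2 [hsymm]
    exact add_neg_cancel _
  exact (smul_eq_zero.1 h2).resolve_left two_ne_zero

variable [Fintype ι]

/-- Gradient of the comparisons broken off at the separator in position `p` of the rank function
`r`: its top item `y` against every item ranked below. For `p = 0` the items outside the ranked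
set, where `r` vanishes, would take part. -/
def sepGrad (r : ι → ℕ) (p : ℕ) : EuclideanSpace ℝ ι :=
  ∑ y with r y = p, ∑ x with p < r x,
    winProb θ x y • (EuclideanSpace.single y 1 - EuclideanSpace.single x 1)

def rankGrad {S : Finset ι} (w : ℕ → ℝ) (σ : Ranking S) : EuclideanSpace ℝ ι :=
  ∑ q ∈ range S.card, w (q + 1) • sepGrad θ (rankFn σ) (q + 1)

variable {S : Finset ι}

lemma sepGrad_consRank_one (s : S) (σ' : Ranking (S.erase s)) :
    sepGrad θ (rankFn (consRank s σ')) 1 = topGrad θ S s := by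
  have htop : ({y | rankFn (consRank s σ') y = 1} : Finset ι) = {s.1} := by
    ext y
    simp only [mem_filter, mem_univ, true_and, mem_singleton]
    by_cases hys : y = s
    · simp [hys, rankFn_consRank_self]
    by_cases hy : y ∈ S.erase s
    · simp [rankFn_consRank_of_mem_erase s σ' hy, hys, ((rankFn_pos_iff σ').2 hy).ne']
    · simp [rankFn_of_notMem _ fun h => hy (mem_erase.2 ⟨hys, h⟩), hys]
  have hbelow : ({x | 1 < rankFn (consRank s σ') x} : Finset ι) = S.erase s := by
    ext x
    simp only [mem_filter, mem_univ, true_and]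
    by_cases hxs : x = s
    · simp [hxs, rankFn_consRank_self]
    by_cases hx : x ∈ S.erase s
    · simp [rankFn_consRank_of_mem_erase s σ' hx, hx, (rankFn_pos_iff σ').2 hx]
    · simp [rankFn_of_notMem _ fun h => hx (mem_erase.2 ⟨hxs, h⟩), hx]
  rw [sepGrad, htop, sum_singleton, hbelow, topGrad]

lemma sepGrad_consRank_succ (s : S) (σ' : Ranking (S.erase s)) {p : ℕ} (hp : 1 ≤ p) :
    sepGrad θ (rankFn (consRank s σ')) (p + 1) = sepGrad θ (rankFn σ') p := by
  have hshift (x : ι) : (rankFn (consRank s σ') x = p + 1 ↔ rankFn σ' x = p) ∧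
      (p + 1 < rankFn (consRank s σ') x ↔ p < rankFn σ' x) := by
    by_cases hxs : x = s
    · rw [hxs, rankFn_consRank_self, rankFn_of_notMem σ' (notMem_erase _ _)]
      omega
    by_cases hx : x ∈ S.erase s
    · rw [rankFn_consRank_of_mem_erase s σ' hx]
      omega
    · rw [rankFn_of_notMem _ fun h => hx (mem_erase.2 ⟨hxs, h⟩), rankFn_of_notMem _ hx]
      omega
  simp only [sepGrad, fun x => (hshift x).1, fun x => (hshift x).2]

lemma rankGrad_consRank {S : Finset ι} (w : ℕ → ℝ) (s : S) (σ' : Ranking (S.erase s)) :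
    rankGrad θ w (consRank s σ') = w 1 • topGrad θ S s + rankGrad θ (fun q => w (q + 1)) σ' := by
  have hk : range S.card = range ((S.erase s).card + 1) := by rw [card_erase_add_one s.2]
  rw [rankGrad, hk, sum_range_succ', zero_add, sepGrad_consRank_one, add_comm, rankGrad]
  congr 1
  exact sum_congr rfl fun q _ => by rw [sepGrad_consRank_succ θ s σ' (Nat.le_add_left 1 q)]

lemma norm_topGrad_sq_le (S : Finset ι) (s : ι) :
    ‖topGrad θ S s‖ ^ 2 ≤ #(S.erase s) * (#(S.erase s) + 1 : ℝ) := by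
  set e : ι → EuclideanSpace ℝ ι := fun x => EuclideanSpace.single x 1
  set A := ∑ x ∈ S.erase s, winProb θ x s
  set u := ∑ x ∈ S.erase s, winProb θ x s • e x
  have hdecomp : topGrad θ S s = A • e s - u := by
    simp only [topGrad, smul_sub, sum_sub_distrib, sum_smul, A, u, e]
  have horth : inner ℝ (A • e s) u = 0 := by
    simp [u, e, inner_sum, real_inner_smul_right, real_inner_smul_left,
      EuclideanSpace.inner_single_left]
  have hu : ‖u‖ ^ 2 = ∑ x ∈ S.erase s, winProb θ x s ^ 2 := by
    rw [← real_inner_self_eq_norm_sq, EuclideanSpace.orthonormal_single.inner_sum]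
    simp [sq]
  have hA : A ≤ #(S.erase s) := by
    simpa using sum_le_sum fun x (_ : x ∈ S.erase s) => winProb_le_one θ x s
  have hsq : ∑ x ∈ S.erase s, winProb θ x s ^ 2 ≤ A :=
    sum_le_sum fun x _ => by nlinarith [winProb_nonneg θ x s, winProb_le_one θ x s]
  have hA0 : 0 ≤ A := sum_nonneg fun x _ => winProb_nonneg θ x s
  rw [hdecomp, norm_sub_sq_real, horth, hu, norm_smul, PiLp.norm_single, norm_one,
    mul_one, Real.norm_eq_abs, sq_abs]
  nlinarith

theorem hasCoshBound_rankGrad (w : ℕ → ℝ) (S : Finset ι) :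
    HasCoshBound (PLProb θ S) (rankGrad θ w) (sepVar w S.card) := by
  induction S using Finset.strongInduction generalizing w with
  | H S ih =>
  obtain rfl | hS := S.eq_empty_or_nonempty
  · simpa [sepVar] using hasCoshBound_of_sum_smul_eq_zero (PLProb_nonneg θ) (sum_PLProb θ ∅)
      (X := rankGrad θ w) (c := 0) (by simp [rankGrad]) (by simp [rankGrad])
  obtain ⟨k, hk⟩ : ∃ k, S.card = k + 1 := ⟨S.card - 1, by have := hS.card_pos; omega⟩
  have hcard (s : S) : (S.erase s).card = k := by rw [card_erase_of_mem s.2, hk]; rfl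
  have htop := hasCoshBound_of_sum_smul_eq_zero (w := fun s : S => firstProb θ S s)
    (X := fun s : S => w 1 • topGrad θ S s) (c := |w 1| * √(k * (k + 1)))
    (fun s => firstProb_nonneg θ S s) (by rw [sum_coe_sort S (firstProb θ S), sum_firstProb θ hS])
    (by simp_rw [smul_comm _ (w 1), ← smul_sum]
        rw [sum_coe_sort S (fun s => firstProb θ S s • topGrad θ S s), sum_firstProb_smul_topGrad,
          smul_zero])
    (fun s => by
      rw [norm_smul, Real.norm_eq_abs]
      gcongr
      exact Real.le_sqrt_of_sq_le (by simpa [hcard s] using norm_topGrad_sq_le θ S s))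
  have hrest (s : S) := ih (S.erase s) (erase_ssubset s.2) (fun q => w (q + 1))
  simp only [hcard] at hrest
  convert (htop.sigma (fun s : S => firstProb_nonneg θ S s) hrest).of_equiv (rankingSigmaEquiv hS)
    (fun σ => PLProb_consRank θ σ.1 σ.2) (fun σ => rankGrad_consRank θ w σ.1 σ.2) using 1
  rw [hk, sepVar_succ, mul_pow, sq_abs, sq_sqrt (by positivity)]

lemma sepGrad_apply {S : Finset ι} (σ : Ranking S) {p : ℕ} (hp : 1 ≤ p) (i : ι) :
    sepGrad θ (rankFn σ) p i = ∑ i0 ∈ S.attach, ∑ i0' ∈ S.attach,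
      if i0.1 = i ∧ i0'.1 ≠ i ∧ ((rankOf σ i0' = p ∧ p < rankOf σ i0) ∨
          (rankOf σ i0 = p ∧ p < rankOf σ i0')) then
        (if rankOf σ i0 < rankOf σ i0' then (1 : ℝ) else 0) -
          exp (θ i0.1) / (exp (θ i0.1) + exp (θ i0'.1))
      else 0 := by
  set g : ι → ℝ := fun x =>
    (if rankFn σ i = p ∧ p < rankFn σ x then winProb θ x i else 0) -
      (if rankFn σ x = p ∧ p < rankFn σ i then winProb θ i x else 0)
  have hlhs : sepGrad θ (rankFn σ) p i = ∑ x ∈ S, g x := by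
    rw [sum_subset (subset_univ S) fun x _ hx => by simp [g, rankFn_of_notMem σ hx]; omega]
    simp only [sepGrad, WithLp.ofLp_sum, Finset.sum_apply, WithLp.ofLp_smul, WithLp.ofLp_sub,
      Pi.smul_apply, Pi.sub_apply, PiLp.ofLp_single, Pi.single_apply, smul_eq_mul, mul_sub,
      sum_sub_distrib, g]
    congr 1
    · simp [mul_ite, sum_ite_irrel, sum_ite_eq, ite_and, sum_filter]
    · rw [sum_comm]
      by_cases h : p < rankFn σ i <;> simp [h, mul_ite, sum_ite_irrel, sum_ite_eq, sum_filter]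
  rw [hlhs]
  by_cases hi : i ∈ S
  · rw [sum_eq_single_of_mem (⟨i, hi⟩ : S) (mem_attach _ _) fun a _ ha => sum_eq_zero fun b _ =>
      if_neg fun h => ha (Subtype.ext h.1), ← sum_attach S g]
    refine sum_congr rfl fun x _ => ?_
    simp only [← rankFn_coe, g, true_and]
    change _ = if _ then _ - winProb θ i x else 0
    obtain hxi | rfl := ne_or_eq (x : ι) i
    · rw [← one_sub_winProb θ i x]
      split_ifs <;> first | omega | simp_all
    · have : ¬(rankFn σ x = p ∧ p < rankFn σ x) := by omega
      simp [this]
  · have hR : rankFn σ i = 0 := rankFn_of_notMem σ hi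
    refine (sum_eq_zero fun x _ => ?_).trans (sum_eq_zero fun a _ => sum_eq_zero fun b _ => ?_).symm
    · simp [g, hR]
      omega
    · rw [if_neg]
      rintro ⟨h, -⟩
      exact hi (h ▸ a.2)

lemma rankGrad_posWeight {ι : Type*} [Fintype ι] [DecidableEq ι] (θ : ι → ℝ) {S : Finset ι}
    {m : ℕ} {p : Fin m → ℕ} (hp : ∀ a, 1 ≤ p a ∧ p a ≤ S.card) (lam : Fin m → ℝ)
    (σ : Ranking S) :
    rankGrad θ (posWeight p lam) σ = ∑ a, lam a • sepGrad θ (rankFn σ) (p a) :=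
  sum_range_posWeight_smul lam hp _

end Gradients

lemma toLp_gradLRB {d n : ℕ} (θ : Fin d → ℝ) (S : Fin n → Finset (Fin d)) (ℓ : Fin n → ℕ)
    (p : (j : Fin n) → Fin (ℓ j) → ℕ) (hp : ∀ j a, 1 ≤ p j a) (lam : (j : Fin n) → Fin (ℓ j) → ℝ)
    (σ : ∀ j, Ranking (S j)) :
    WithLp.toLp 2 (gradLRB S ℓ p lam θ σ) =
      ∑ j, ∑ a, lam j a • sepGrad θ (rankFn (σ j)) (p j a) := by
  ext i
  simp only [gradLRB, WithLp.ofLp_sum, Finset.sum_apply, WithLp.ofLp_smul,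
    Pi.smul_apply, smul_eq_mul, sepGrad_apply θ (σ _) (hp _ _), mul_sum, mul_ite, mul_zero]

theorem hasCoshBound_gradLRB {d n : ℕ} (θ : Fin d → ℝ) (S : Fin n → Finset (Fin d))
    (ℓ : Fin n → ℕ) (p : (j : Fin n) → Fin (ℓ j) → ℕ) (hpmono : ∀ j, StrictMono (p j))
    (hprange : ∀ j a, 1 ≤ p j a ∧ p j a ≤ (S j).card - 1) (lam : (j : Fin n) → Fin (ℓ j) → ℝ) :
    HasCoshBound (fun σ : ∀ j, Ranking (S j) => ∏ j, PLProb θ (S j) (σ j))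
      (fun σ => WithLp.toLp 2 (gradLRB S ℓ p lam θ σ))
      (∑ j, ∑ a, lam j a ^ 2 * (((S j).card : ℝ) - p j a) * (((S j).card : ℝ) - p j a + 1)) := by
  have hp (j : Fin n) (a : Fin (ℓ j)) : 1 ≤ p j a ∧ p j a ≤ (S j).card := by
    have := hprange j a
    omega
  have h := HasCoshBound.pi (fun j σ => PLProb_nonneg θ σ)
    fun j => hasCoshBound_rankGrad θ (posWeight (p j) (lam j)) (S j)
  simp only [sepVar_posWeight (hpmono _).injective (hp _), rankGrad_posWeight θ (hp _)] at h
  simpa only [toLp_gradLRB θ S ℓ p (fun j a => (hp j a).1)] using h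

end

theorem statement_8_general
    (d n : ℕ) (hd : 2 ≤ d)
    (θstar : Fin d → ℝ)
    (S : Fin n → Finset (Fin d))
    (ℓ : Fin n → ℕ)
    (p : (j : Fin n) → Fin (ℓ j) → ℕ)
    (hpmono : ∀ j, StrictMono (p j))
    (hprange : ∀ j a, 1 ≤ p j a ∧ p j a ≤ (S j).card - 1)
    (lam : (j : Fin n) → Fin (ℓ j) → ℝ) :
    1 - 2 * Real.exp 3 / (d : ℝ) ^ 3 ≤
      jointProb θstar S (fun σ =>
        l2norm (gradLRB S ℓ p lam θstar σ) ≤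
          Real.sqrt (6 * Real.log d *
            ∑ j, ∑ a, (lam j a) ^ 2 * (((S j).card : ℝ) - (p j a : ℕ)) *
              (((S j).card : ℝ) - (p j a : ℕ) + 1))) := by
  have hV : 0 ≤ ∑ j, ∑ a, lam j a ^ 2 * (((S j).card : ℝ) - p j a) *
      (((S j).card : ℝ) - p j a + 1) := by
    refine sum_nonneg fun j _ => sum_nonneg fun a _ => ?_
    have : (p j a : ℝ) + 1 ≤ (S j).card := by
      exact_mod_cast (by have := hprange j a; omega : p j a + 1 ≤ (S j).card)
    exact mul_nonneg (mul_nonneg (sq_nonneg _) (by linarith)) (by linarith)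
  have hd1 : (1 : ℝ) ≤ d := by exact_mod_cast (by omega : 1 ≤ d)
  have key := (hasCoshBound_gradLRB θstar S ℓ p hpmono hprange lam).one_sub_le_sum_norm_le
    (fun σ => prod_nonneg fun j _ => PLProb_nonneg θstar (σ j)) (sum_prod_PLProb θstar S) hV
    (c := 6 * log d) (mul_nonneg (by norm_num) (log_nonneg hd1))
  have htail : exp (-(6 * log d / 2)) = ((d : ℝ) ^ 3)⁻¹ := by
    rw [show -(6 * log d / 2) = -((3 : ℕ) * log d) by push_cast; ring, ← log_pow, exp_neg,
      exp_log (by positivity)]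
  calc 1 - 2 * exp 3 / (d : ℝ) ^ 3 ≤ 1 - 2 * exp (-(6 * log d / 2)) := by
        rw [htail, mul_div_assoc, div_eq_mul_inv]
        gcongr
        exact le_mul_of_one_le_left (by positivity) (one_le_exp (by norm_num))
    _ ≤ _ := key
    _ = _ := by
        simp only [jointProb, sum_filter, l2norm, EuclideanSpace.norm_eq, Real.norm_eq_abs, sq_abs]
        congr

theorem statement_8
    (d n : ℕ) (hd : 2 ≤ d) (b : ℝ)
    (θstar : Fin d → ℝ) (hθ : OmegaB b θstar)
    (S : Fin n → Finset (Fin d)) (hS : ∀ j, 2 ≤ (S j).card)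
    (ℓ : Fin n → ℕ) (hℓ : ∀ j, 1 ≤ ℓ j)
    (p : (j : Fin n) → Fin (ℓ j) → ℕ)
    (hpmono : ∀ j, StrictMono (p j))
    (hprange : ∀ j a, 1 ≤ p j a ∧ p j a ≤ (S j).card - 1)
    (lam : (j : Fin n) → Fin (ℓ j) → ℝ) (hlam : ∀ j a, 0 ≤ lam j a) :
    1 - 2 * Real.exp 3 / (d : ℝ) ^ 3 ≤
      jointProb θstar S (fun σ =>
        l2norm (gradLRB S ℓ p lam θstar σ) ≤
          Real.sqrt (6 * Real.log d *
            ∑ j, ∑ a, (lam j a) ^ 2 * (((S j).card : ℝ) - (p j a : ℕ)) *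
              (((S j).card : ℝ) - (p j a : ℕ) + 1))) :=
  statement_8_general d n hd θstar S ℓ p hpmono hprange lam
end

section
/- Let (X_0, X_1, …, X_n) be a martingale taking values in ℝ^d with X_0 = 0 and ‖X_i − X_{i−1}‖₂ ≤ c_i almost surely for nonnegative constants c_i, 1 ≤ i ≤ n. Then for every δ > 0, P[‖X_n‖₂ ≥ δ] ≤ 2e³ exp(−δ²/(2 Σ_{i=1}^n c_i²)). -/
/-!
Pinelis' argument. For `‖w‖ ≤ c`, expanding `‖v + w‖² = ‖v‖² + ‖w‖² + 2⟪v, w⟫` and using the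
convexity of `u ↦ cosh √u` gives `cosh ‖v + w‖ ≤ cosh ‖v‖ cosh c + ⟪ψ(v), w⟫`, where `ψ(v)` is a
multiple of `v` depending only on `‖v‖`. For `v = X_{k-1}` and `w` the `k`-th increment, `ψ(X_{k-1})`
is bounded and `ℱ_{k-1}`-measurable, so the inner-product term has mean zero and
`E cosh ‖X_k‖ ≤ cosh c_k · E cosh ‖X_{k-1}‖ ≤ exp (c_k² / 2) · E cosh ‖X_{k-1}‖`. Applied to `λ X`,
this bounds `E cosh (λ ‖X_n‖)`, and Markov's inequality with `λ = δ / ∑ c_i²` concludes.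
-/

open Real Set MeasureTheory

namespace Real

theorem convexOn_sinh_Ici : ConvexOn ℝ (Ici 0) sinh := by
  refine convexOn_of_deriv2_nonneg (convex_Ici 0) continuous_sinh.continuousOn
    differentiable_sinh.differentiableOn (by simp [differentiable_cosh.differentiableOn]) ?_
  intro x hx
  rw [interior_Ici] at hx
  simpa using (sinh_pos_iff.2 hx).le

theorem monotoneOn_sinh_div_self : MonotoneOn (fun x ↦ sinh x / x) (Ioi 0) := by
  intro x hx y hy hxy
  simpa using convexOn_sinh_Ici.secant_mono (a := 0) self_mem_Ici (Ioi_subset_Ici_self hx)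
    (Ioi_subset_Ici_self hy) (ne_of_gt hx) (ne_of_gt hy) hxy

theorem hasDerivAt_cosh_sqrt {u : ℝ} (hu : 0 < u) :
    HasDerivAt (fun u ↦ cosh √u) (sinh √u / √u / 2) u :=
  (hasDerivAt_sqrt hu.ne').cosh.congr_deriv (by ring)

theorem convexOn_cosh_sqrt : ConvexOn ℝ (Ici 0) fun u ↦ cosh √u := by
  refine MonotoneOn.convexOn_of_deriv (convex_Ici 0) (by fun_prop) ?_ ?_ <;> rw [interior_Ici]
  · exact fun u hu ↦ (hasDerivAt_cosh_sqrt hu).differentiableAt.differentiableWithinAt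
  · intro u hu v hv huv
    rw [(hasDerivAt_cosh_sqrt hu).deriv, (hasDerivAt_cosh_sqrt hv).deriv]
    gcongr ?_ / 2
    exact monotoneOn_sinh_div_self (sqrt_pos.2 hu) (sqrt_pos.2 hv) (sqrt_le_sqrt huv)

/-- `a² + b² + 2t` is the convex combination of `(a - b)²` and `(a + b)²` with weights
`(ab ∓ t) / 2ab`, and at these two points the bound is an equality. -/
theorem cosh_sqrt_le_of_abs_le_mul {a b t : ℝ} (ha : 0 < a) (hb : 0 < b) (ht : |t| ≤ a * b) :
    cosh √(a ^ 2 + b ^ 2 + 2 * t) ≤ cosh a * cosh b + t * (sinh a * sinh b / (a * b)) := by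
  obtain ⟨ht₁, ht₂⟩ := abs_le.1 ht
  have h := convexOn_cosh_sqrt.2 (sq_nonneg (a - b)) (sq_nonneg (a + b))
    (div_nonneg (sub_nonneg.2 ht₂) (by positivity) : 0 ≤ (a * b - t) / (2 * (a * b)))
    (div_nonneg (by linarith) (by positivity) : 0 ≤ (a * b + t) / (2 * (a * b)))
    (by field_simp; ring)
  have harg : (a * b - t) / (2 * (a * b)) * (a - b) ^ 2 + (a * b + t) / (2 * (a * b)) * (a + b) ^ 2
      = a ^ 2 + b ^ 2 + 2 * t := by
    field_simp; ring
  have hval : (a * b - t) / (2 * (a * b)) * cosh (a - b) + (a * b + t) / (2 * (a * b)) * cosh (a + b)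
      = cosh a * cosh b + t * (sinh a * sinh b / (a * b)) := by
    rw [cosh_sub, cosh_add]; field_simp; ring
  simpa only [smul_eq_mul, sqrt_sq_eq_abs, cosh_abs, harg, hval] using h

end Real

section InnerProductSpace

variable {F : Type*} [NormedAddCommGroup F] [InnerProductSpace ℝ F]

/-- At `v = 0` or `c = 0` the coefficient of `v` is `0`, by the convention `x / 0 = 0`. -/
theorem cosh_norm_add_le (v : F) {w : F} {c : ℝ} (hw : ‖w‖ ≤ c) :
    cosh ‖v + w‖ ≤ cosh ‖v‖ * cosh c + inner ℝ ((sinh ‖v‖ * sinh c / (‖v‖ * c)) • v) w := by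
  have hc : 0 ≤ c := (norm_nonneg w).trans hw
  rcases eq_or_ne v 0 with rfl | hv
  · simpa [cosh_le_cosh, abs_of_nonneg hc] using hw
  rcases hc.eq_or_lt with rfl | hc
  · simp [norm_le_zero_iff.1 hw]
  have ht : |inner ℝ v w| ≤ ‖v‖ * c := (abs_real_inner_le_norm v w).trans (by gcongr)
  have hsq : ‖v + w‖ ≤ √(‖v‖ ^ 2 + c ^ 2 + 2 * inner ℝ v w) := by
    refine Real.le_sqrt_of_sq_le ?_
    rw [norm_add_sq_real]
    nlinarith [norm_nonneg w]
  calc cosh ‖v + w‖ ≤ cosh √(‖v‖ ^ 2 + c ^ 2 + 2 * inner ℝ v w) :=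
        cosh_le_cosh.2 (abs_le_abs_of_nonneg (norm_nonneg _) hsq)
    _ ≤ cosh ‖v‖ * cosh c + inner ℝ v w * (sinh ‖v‖ * sinh c / (‖v‖ * c)) :=
        cosh_sqrt_le_of_abs_le_mul (norm_pos_iff.2 hv) hc ht
    _ = _ := by rw [real_inner_smul_left, mul_comm (inner ℝ v w)]

end InnerProductSpace

section Tail

variable {Ω F : Type*} {m0 : MeasurableSpace Ω} {μ : Measure Ω} [NormedAddCommGroup F]

theorem integrable_cosh_norm [IsFiniteMeasure μ] {f : Ω → F} (hf : AEStronglyMeasurable f μ)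
    {R : ℝ} (hR : ∀ᵐ ω ∂μ, ‖f ω‖ ≤ R) : Integrable (fun ω ↦ cosh ‖f ω‖) μ := by
  refine .of_bound (continuous_cosh.comp_aestronglyMeasurable hf.norm) (cosh R) ?_
  filter_upwards [hR] with ω hω
  rw [norm_of_nonneg (cosh_pos _).le]
  exact cosh_le_cosh.2 (abs_le_abs_of_nonneg (norm_nonneg _) hω)


theorem measureReal_norm_ge_le_integral_cosh_norm [IsFiniteMeasure μ] {f : Ω → F} (hf : AEStronglyMeasurable f μ)
    {R : ℝ} (hR : ∀ᵐ ω ∂μ, ‖f ω‖ ≤ R) {δ : ℝ} (hδ : 0 ≤ δ) :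
    μ.real {ω | δ ≤ ‖f ω‖} ≤ 2 * exp (-δ) * ∫ ω, cosh ‖f ω‖ ∂μ := by
  have hmarkov : cosh δ * μ.real {ω | δ ≤ ‖f ω‖} ≤ ∫ ω, cosh ‖f ω‖ ∂μ := by
    refine le_trans ?_ (mul_meas_ge_le_integral_of_nonneg
      (ae_of_all _ fun _ ↦ (cosh_pos _).le) (integrable_cosh_norm hf hR) (cosh δ))
    refine mul_le_mul_of_nonneg_left (measureReal_mono fun ω (hω : δ ≤ ‖f ω‖) ↦ ?_) (cosh_pos δ).le
    exact cosh_le_cosh.2 (abs_le_abs_of_nonneg hδ hω)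
  have hcosh : 1 ≤ 2 * exp (-δ) * cosh δ := by
    have : 2 * exp (-δ) * cosh δ = 1 + exp (-δ) ^ 2 := by
      rw [cosh_eq, exp_neg]
      field_simp
    rw [this]
    exact le_add_of_nonneg_right (sq_nonneg _)
  calc μ.real {ω | δ ≤ ‖f ω‖} ≤ 2 * exp (-δ) * cosh δ * μ.real {ω | δ ≤ ‖f ω‖} :=
        le_mul_of_one_le_left measureReal_nonneg hcosh
    _ ≤ 2 * exp (-δ) * ∫ ω, cosh ‖f ω‖ ∂μ := by
        rw [mul_assoc]
        gcongr

theorem ae_norm_le_sum_of_norm_sub_le {X : ℕ → Ω → F} {c : ℕ → ℝ} {n : ℕ}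
    (hX0 : ∀ ω, X 0 ω = 0)
    (hbd : ∀ i, 1 ≤ i → i ≤ n → ∀ᵐ ω ∂μ, ‖X i ω - X (i - 1) ω‖ ≤ c i) :
    ∀ k ≤ n, ∀ᵐ ω ∂μ, ‖X k ω‖ ≤ ∑ i ∈ Finset.Icc 1 k, c i := by
  intro k hk
  induction k with
  | zero => simp [hX0]
  | succ k ih =>
    filter_upwards [ih (by omega), hbd (k + 1) (by omega) hk] with ω hXk hinc
    rw [Finset.sum_Icc_succ_top (by omega)]
    calc ‖X (k + 1) ω‖ ≤ ‖X k ω‖ + ‖X (k + 1) ω - X k ω‖ := norm_le_insert' _ _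
      _ ≤ _ := add_le_add hXk (by simpa using hinc)

end Tail

namespace MeasureTheory.Martingale

variable {Ω ι F : Type*} {m0 : MeasurableSpace Ω} {μ : Measure Ω} [NormedAddCommGroup F]
  [InnerProductSpace ℝ F] [CompleteSpace F]

section Preorder

variable [Preorder ι] {ℱ : Filtration ι m0} {X : ι → Ω → F}

theorem integral_inner_sub_eq_zero [IsFiniteMeasure μ]
    (hX : Martingale X ℱ μ) {i j : ι} (hij : i ≤ j) {Y : Ω → F}
    (hY : StronglyMeasurable[ℱ i] Y) {C : ℝ} (hYC : ∀ᵐ ω ∂μ, ‖Y ω‖ ≤ C) :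
    ∫ ω, inner ℝ (Y ω) (X j ω - X i ω) ∂μ = 0 := by
  have hΔ : μ[X j - X i | ℱ i] =ᵐ[μ] 0 := by
    filter_upwards [condExp_sub (hX.integrable j) (hX.integrable i) (ℱ i),
      hX.condExp_ae_eq hij] with ω hsub hj
    rw [hsub, Pi.sub_apply, hj, condExp_of_stronglyMeasurable (ℱ.le i)
      (hX.stronglyMeasurable i) (hX.integrable i), sub_self, Pi.zero_apply]
  calc ∫ ω, inner ℝ (Y ω) (X j ω - X i ω) ∂μ
      = ∫ ω, (μ[fun ω ↦ innerSL ℝ (Y ω) ((X j - X i) ω) | ℱ i]) ω ∂μ :=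
        (integral_condExp (ℱ.le i)).symm
    _ = ∫ ω, innerSL ℝ (Y ω) ((μ[X j - X i | ℱ i]) ω) ∂μ :=
        integral_congr_ae (condExp_stronglyMeasurable_bilin_of_bound _ (ℱ.le i) hY
          ((hX.integrable j).sub (hX.integrable i)) C hYC)
    _ = 0 := by
        rw [integral_congr_ae (hΔ.mono fun ω hω ↦ by rw [hω])]
        simp

theorem integral_cosh_norm_le_cosh_mul [IsFiniteMeasure μ]
    (hX : Martingale X ℱ μ) {i j : ι} (hij : i ≤ j) {c R : ℝ}
    (hR : ∀ᵐ ω ∂μ, ‖X i ω‖ ≤ R) (hc : ∀ᵐ ω ∂μ, ‖X j ω - X i ω‖ ≤ c) :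
    ∫ ω, cosh ‖X j ω‖ ∂μ ≤ cosh c * ∫ ω, cosh ‖X i ω‖ ∂μ := by
  set Y : Ω → F := fun ω ↦ (sinh ‖X i ω‖ * sinh c / (‖X i ω‖ * c)) • X i ω
  have hY : StronglyMeasurable[ℱ i] Y := by
    have hnorm := (hX.stronglyMeasurable i).norm.measurable
    exact (by fun_prop : Measurable[ℱ i] fun ω ↦ sinh ‖X i ω‖ * sinh c / (‖X i ω‖ * c))
      |>.stronglyMeasurable.smul (hX.stronglyMeasurable i)
  have hYC : ∀ᵐ ω ∂μ, ‖Y ω‖ ≤ sinh R * |sinh c / c| := by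
    filter_upwards [hR] with ω hω
    have hr := norm_nonneg (X i ω)
    have hnorm : ‖Y ω‖ = sinh ‖X i ω‖ * |sinh c / c| := by
      rcases hr.eq_or_lt with h0 | hpos
      · simp [Y, ← h0]
      · rw [norm_smul, norm_eq_abs, abs_div, abs_mul, abs_mul, abs_of_pos hpos,
          abs_of_nonneg (sinh_nonneg_iff.2 hr), abs_div]
        field_simp
    rw [hnorm]
    exact mul_le_mul_of_nonneg_right (sinh_le_sinh.2 hω) (abs_nonneg _)
  have hcosh_int := integrable_cosh_norm (hX.integrable i).aestronglyMeasurable hR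
  have hinner_int : Integrable (fun ω ↦ inner ℝ (Y ω) (X j ω - X i ω)) μ :=
    (innerSL ℝ).integrable_of_bilin_of_bdd_left _ (hY.mono (ℱ.le i)).aestronglyMeasurable hYC
      ((hX.integrable j).sub (hX.integrable i))
  calc ∫ ω, cosh ‖X j ω‖ ∂μ
      ≤ ∫ ω, (cosh ‖X i ω‖ * cosh c + inner ℝ (Y ω) (X j ω - X i ω)) ∂μ := by
        refine integral_mono_of_nonneg (ae_of_all _ fun _ ↦ (cosh_pos _).le)
          ((hcosh_int.mul_const _).add hinner_int) ?_
        filter_upwards [hc] with ω hω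
        simpa using cosh_norm_add_le (X i ω) hω
    _ = cosh c * ∫ ω, cosh ‖X i ω‖ ∂μ := by
        rw [integral_add (hcosh_int.mul_const _) hinner_int, integral_mul_const,
          hX.integral_inner_sub_eq_zero hij hY hYC, add_zero, mul_comm]

end Preorder

variable {ℱ : Filtration ℕ m0} {X : ℕ → Ω → F} {c : ℕ → ℝ} {n : ℕ}

theorem integral_cosh_norm_le_exp [IsProbabilityMeasure μ] (hX : Martingale X ℱ μ)
    (hX0 : ∀ ω, X 0 ω = 0)
    (hbd : ∀ i, 1 ≤ i → i ≤ n → ∀ᵐ ω ∂μ, ‖X i ω - X (i - 1) ω‖ ≤ c i) :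
    ∀ k ≤ n, ∫ ω, cosh ‖X k ω‖ ∂μ ≤ exp ((∑ i ∈ Finset.Icc 1 k, c i ^ 2) / 2) := by
  intro k hk
  induction k with
  | zero => simp [hX0]
  | succ k ih =>
    have hinc : ∀ᵐ ω ∂μ, ‖X (k + 1) ω - X k ω‖ ≤ c (k + 1) := by
      simpa using hbd (k + 1) (by omega) hk
    calc ∫ ω, cosh ‖X (k + 1) ω‖ ∂μ ≤ cosh (c (k + 1)) * ∫ ω, cosh ‖X k ω‖ ∂μ :=
          hX.integral_cosh_norm_le_cosh_mul k.le_succ (ae_norm_le_sum_of_norm_sub_le hX0 hbd k (by omega))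
            hinc
      _ ≤ exp (c (k + 1) ^ 2 / 2) * exp ((∑ i ∈ Finset.Icc 1 k, c i ^ 2) / 2) := by
          gcongr
          · exact cosh_le_exp_half_sq _
          · exact ih (by omega)
      _ = exp ((∑ i ∈ Finset.Icc 1 (k + 1), c i ^ 2) / 2) := by
          rw [← exp_add, Finset.sum_Icc_succ_top (by omega)]
          ring_nf

theorem measureReal_norm_ge_le_exp [IsProbabilityMeasure μ] (hX : Martingale X ℱ μ)
    (hX0 : ∀ ω, X 0 ω = 0)
    (hbd : ∀ i, 1 ≤ i → i ≤ n → ∀ᵐ ω ∂μ, ‖X i ω - X (i - 1) ω‖ ≤ c i)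
    {l δ : ℝ} (hl : 0 < l) (hδ : 0 ≤ δ) :
    μ.real {ω | δ ≤ ‖X n ω‖} ≤ 2 * exp (l ^ 2 * (∑ i ∈ Finset.Icc 1 n, c i ^ 2) / 2 - l * δ) := by
  have hlX0 : ∀ ω, (l • X) 0 ω = 0 := by simp [hX0]
  have hlbd : ∀ i, 1 ≤ i → i ≤ n → ∀ᵐ ω ∂μ, ‖(l • X) i ω - (l • X) (i - 1) ω‖ ≤ l * c i :=
    fun i hi hin ↦ (hbd i hi hin).mono fun ω hω ↦ by
      simpa [← smul_sub, norm_smul, abs_of_pos hl] using mul_le_mul_of_nonneg_left hω hl.le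
  have hset : {ω | δ ≤ ‖X n ω‖} = {ω | l * δ ≤ ‖(l • X) n ω‖} := by
    ext ω
    simp [norm_smul, abs_of_pos hl, mul_le_mul_iff_right₀ hl]
  rw [hset]
  calc μ.real {ω | l * δ ≤ ‖(l • X) n ω‖}
      ≤ 2 * exp (-(l * δ)) * ∫ ω, cosh ‖(l • X) n ω‖ ∂μ :=
        measureReal_norm_ge_le_integral_cosh_norm ((hX.smul l).integrable n).aestronglyMeasurable
          (ae_norm_le_sum_of_norm_sub_le hlX0 hlbd n le_rfl) (by positivity)
    _ ≤ 2 * exp (-(l * δ)) * exp ((∑ i ∈ Finset.Icc 1 n, (l * c i) ^ 2) / 2) := by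
        gcongr
        exact (hX.smul l).integral_cosh_norm_le_exp hlX0 hlbd n le_rfl
    _ = 2 * exp (l ^ 2 * (∑ i ∈ Finset.Icc 1 n, c i ^ 2) / 2 - l * δ) := by
        rw [mul_assoc, ← exp_add]
        simp_rw [mul_pow, ← Finset.mul_sum]
        ring_nf

end MeasureTheory.Martingale

theorem statement_12_general {Ω : Type*} {m0 : MeasurableSpace Ω} {μ : Measure Ω}
    [IsProbabilityMeasure μ]
    (d n : ℕ) (ℱ : Filtration ℕ m0)
    (X : ℕ → Ω → EuclideanSpace ℝ (Fin d))
    (hX : Martingale X ℱ μ)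
    (hX0 : ∀ ω, X 0 ω = 0)
    (c : ℕ → ℝ)
    (hbd : ∀ i, 1 ≤ i → i ≤ n → ∀ᵐ ω ∂μ, ‖X i ω - X (i - 1) ω‖ ≤ c i)
    (δ : ℝ) (hδ : 0 < δ) :
    μ {ω | δ ≤ ‖X n ω‖} ≤
      ENNReal.ofReal (2 * Real.exp 3 *
        Real.exp (-δ ^ 2 / (2 * ∑ i ∈ Finset.Icc 1 n, (c i) ^ 2))) := by
  set S := ∑ i ∈ Finset.Icc 1 n, c i ^ 2
  have hexp3 : 1 ≤ exp 3 := one_le_exp (by norm_num)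
  have hS0 : 0 ≤ S := Finset.sum_nonneg fun i _ ↦ sq_nonneg (c i)
  rcases hS0.eq_or_lt with hS | hS
  · -- the exponent is `-δ ^ 2 / 0 = 0`
    rw [← hS, mul_zero, div_zero, exp_zero, mul_one]
    exact prob_le_one.trans (ENNReal.one_le_ofReal.2 (by linarith))
  rw [← ofReal_measureReal]
  refine ENNReal.ofReal_le_ofReal ?_
  calc μ.real {ω | δ ≤ ‖X n ω‖} ≤ 2 * exp ((δ / S) ^ 2 * S / 2 - δ / S * δ) :=
        hX.measureReal_norm_ge_le_exp hX0 hbd (div_pos hδ hS) hδ.le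
    _ = 2 * exp (-δ ^ 2 / (2 * S)) := by
        congr 2
        field_simp
        ring
    _ ≤ 2 * exp 3 * exp (-δ ^ 2 / (2 * S)) := by
        gcongr
        exact le_mul_of_one_le_right zero_le_two hexp3

theorem statement_12 {Ω : Type*} {m0 : MeasurableSpace Ω} {μ : Measure Ω}
    [IsProbabilityMeasure μ]
    (d n : ℕ) (ℱ : Filtration ℕ m0)
    (X : ℕ → Ω → EuclideanSpace ℝ (Fin d))
    (hX : Martingale X ℱ μ)
    (hX0 : ∀ ω, X 0 ω = 0)
    (c : ℕ → ℝ) (hc : ∀ i, 0 ≤ c i)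
    (hbd : ∀ i, 1 ≤ i → i ≤ n → ∀ᵐ ω ∂μ, ‖X i ω - X (i - 1) ω‖ ≤ c i)
    (δ : ℝ) (hδ : 0 < δ) :
    μ {ω | δ ≤ ‖X n ω‖} ≤
      ENNReal.ofReal (2 * Real.exp 3 *
        Real.exp (-δ ^ 2 / (2 * ∑ i ∈ Finset.Icc 1 n, (c i) ^ 2))) :=
  statement_12_general d n ℱ X hX hX0 c hbd δ hδ
end

section
/- Let σ be a ranking over a set S of κ items drawn from the PL model with parameter θ satisfying |θ_i| ≤ b for all i ∈ S. For any item i ∈ S and any 1 ≤ ℓ ≤ κ − 1, P_θ[σ^{−1}(i) = ℓ] ≤ (e^{6b}/κ) · (1 − ℓ/(κ + α))^{α − 1} ≤ e^{6b}/(κ − ℓ), where α = ⌊α̃⌋ and α̃ = min_{ℓ′∈[ℓ]} min_{Ω ⊆ S∖{i}, |Ω| = κ−ℓ′+1} e^{θ_i} / ((Σ_{j∈Ω} e^{θ_j})/|Ω|). -/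
open Real

/-! Condition on the first pick. For `i` to be ranked `ℓ`-th, each of the first `ℓ - 1` picks
must avoid `i`. When the remaining pool `A ∋ i` has `s + 1` items, a pick avoids `i` with
probability `∑_{A∖i} e^θ / ∑_A e^θ ≤ s / (s + α)`, because `α ≤ α̃ ≤ e^{θ_i} s / ∑_{A∖i} e^θ`;
the final pick of `i` among `κ - ℓ + 1` items has probability at most `e^{2b} / (κ - ℓ + 1)`.
The product `∏_{s=κ-ℓ+1}^{κ-1} s / (s + α)` is a ratio of rising factorials, equal to
`(κ + α) / κ · ∏_{j<α} (κ-ℓ+1+j) / (κ+1+j)`, and each of these `α` factors is at most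
`(κ - ℓ + α) / (κ + α) = 1 - ℓ / (κ + α)`. The leftover constants are absorbed into `e^{6b}`
using `α ≤ α̃ ≤ e^{2b}`. -/

namespace Ranking

variable {ι : Type*} [DecidableEq ι]

def optionEraseEquiv {S : Finset ι} {j : ι} (hj : j ∈ S) :
    Option {x // x ∈ S.erase j} ≃ {x // x ∈ S} where
  toFun o := o.elim ⟨j, hj⟩ fun x => ⟨x, Finset.mem_of_mem_erase x.2⟩
  invFun x := if h : x.1 = j then none else some ⟨x, Finset.mem_erase.2 ⟨h, x.2⟩⟩
  left_inv o := by
    rcases o with _ | ⟨x, hx⟩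
    · simp
    · simp [(Finset.mem_erase.1 hx).1]
  right_inv x := by
    by_cases h : x.1 = j
    · simp [h, ← Subtype.val_inj]
    · simp [h]

def cons {S : Finset ι} {j : ι} (hj : j ∈ S) (τ : Ranking (S.erase j)) : Ranking S :=
  (finCongr (Finset.card_erase_add_one hj).symm).trans
    ((finSuccEquiv _).trans ((Equiv.optionCongr τ).trans (optionEraseEquiv hj)))

theorem cons_apply_cast_zero {S : Finset ι} {j : ι} (hj : j ∈ S) (τ : Ranking (S.erase j)) :
    cons hj τ (Fin.cast (Finset.card_erase_add_one hj) 0) = ⟨j, hj⟩ := by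
  simp [cons, optionEraseEquiv]

theorem cons_apply_cast_succ {S : Finset ι} {j : ι} (hj : j ∈ S) (τ : Ranking (S.erase j))
    (c : Fin (S.erase j).card) :
    cons hj τ (Fin.cast (Finset.card_erase_add_one hj) c.succ) =
      ⟨τ c, Finset.mem_of_mem_erase (τ c).2⟩ := by
  simp [cons, optionEraseEquiv]

theorem rankOf_cons_self {S : Finset ι} {j : ι} (hj : j ∈ S) (τ : Ranking (S.erase j)) :
    rankOf (cons hj τ) ⟨j, hj⟩ = 1 := by
  simp [rankOf, cons, optionEraseEquiv, ← Equiv.optionCongr_symm]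

theorem rankOf_cons_of_ne {S : Finset ι} {i j : ι} (hj : j ∈ S) (hi : i ∈ S) (hij : i ≠ j)
    (τ : Ranking (S.erase j)) :
    rankOf (cons hj τ) ⟨i, hi⟩ = rankOf τ ⟨i, Finset.mem_erase.2 ⟨hij, hi⟩⟩ + 1 := by
  simp [rankOf, cons, optionEraseEquiv, ← Equiv.optionCongr_symm, hij]

theorem card_ranking (S : Finset ι) : Fintype.card (Ranking S) = S.card.factorial := by
  rw [Fintype.card_equiv S.equivFin.symm]
  simp

theorem cons_sigma_injective (S : Finset ι) :
    Function.Injective fun p : Σ j : S, Ranking (S.erase j) => cons p.1.2 p.2 := by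
  rintro ⟨⟨j, hj⟩, τ⟩ ⟨⟨j', hj'⟩, τ'⟩ h
  have hjj' : j = j' := by
    have h0 := DFunLike.congr_fun h (Fin.cast (Finset.card_erase_add_one hj) 0)
    rwa [cons_apply_cast_zero, show Fin.cast (Finset.card_erase_add_one hj) 0 =
      Fin.cast (Finset.card_erase_add_one hj') 0 from rfl, cons_apply_cast_zero,
      Subtype.mk.injEq] at h0
  subst hjj'
  have hττ' : τ = τ' := Equiv.ext fun c => by
    have hc := DFunLike.congr_fun h (Fin.cast (Finset.card_erase_add_one hj) c.succ)
    rw [cons_apply_cast_succ, cons_apply_cast_succ, Subtype.mk.injEq] at hc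
    exact Subtype.ext hc
  rw [hττ']

theorem cons_sigma_bijective {S : Finset ι} (hS : S.Nonempty) :
    Function.Bijective fun p : Σ j : S, Ranking (S.erase j) => cons p.1.2 p.2 := by
  refine (Fintype.bijective_iff_injective_and_card _).2 ⟨cons_sigma_injective S, ?_⟩
  simp only [Fintype.card_sigma, card_ranking, Finset.card_erase_of_mem (Finset.coe_mem _),
    Finset.sum_const, Finset.card_univ, Fintype.card_coe, smul_eq_mul]
  exact Nat.mul_factorial_pred hS.card_pos.ne'

theorem sum_eq_sum_cons {M : Type*} [AddCommMonoid M] {S : Finset ι} (hS : S.Nonempty)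
    (f : Ranking S → M) :
    ∑ σ, f σ = ∑ j : S, ∑ τ : Ranking (S.erase j), f (cons j.2 τ) := by
  refine (Fintype.sum_bijective _ (cons_sigma_bijective hS) _ _ fun _ => rfl).symm.trans ?_
  exact Fintype.sum_sigma _

end Ranking

section PlackettLuce

variable {ι : Type*} [DecidableEq ι]

noncomputable def PLProbOfWeights {n : ℕ} (w : Fin n → ℝ) : ℝ :=
  ∏ a, w a / ∑ a' ∈ Finset.univ.filter (fun a' => a ≤ a'), w a'

theorem PLProbOfWeights_succ {n : ℕ} (w : Fin (n + 1) → ℝ) :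
    PLProbOfWeights w = (w 0 / ∑ a, w a) * PLProbOfWeights fun a => w a.succ := by
  rw [PLProbOfWeights, Fin.prod_univ_succ, PLProbOfWeights]
  congr 1
  · simp
  · refine Fintype.prod_congr _ _ fun a => ?_
    congr 1
    rw [Finset.sum_filter, Finset.sum_filter, Fin.sum_univ_succ]
    simp [Fin.succ_le_succ_iff, Fin.succ_ne_zero]

theorem PLProbOfWeights_cast {m n : ℕ} (h : m = n) (w : Fin n → ℝ) :
    PLProbOfWeights w = PLProbOfWeights fun a => w (Fin.cast h a) := by
  subst h
  rfl

theorem PLProb_cons (θ : ι → ℝ) {S : Finset ι} {j : ι} (hj : j ∈ S) (τ : Ranking (S.erase j)) :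
    PLProb θ S (Ranking.cons hj τ) =
      (exp (θ j) / ∑ k ∈ S, exp (θ k)) * PLProb θ (S.erase j) τ := by
  have h := Finset.card_erase_add_one hj
  change PLProbOfWeights _ = _
  rw [PLProbOfWeights_cast h, PLProbOfWeights_succ]
  simp only [Ranking.cons_apply_cast_zero, Ranking.cons_apply_cast_succ]
  congr 2
  rw [← Finset.sum_coe_sort S]
  exact Equiv.sum_comp ((finCongr h).trans (Ranking.cons hj τ)) fun k => exp (θ k)

theorem PLprobEvent_eq_sum_cons (θ : ι → ℝ) {S : Finset ι} (hS : S.Nonempty)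
    (E : Ranking S → Prop) :
    PLprobEvent θ S E = ∑ j : S, (exp (θ j) / ∑ k ∈ S, exp (θ k)) *
      PLprobEvent θ (S.erase j) fun τ => E (Ranking.cons j.2 τ) := by
  rw [PLprobEvent, Ranking.sum_eq_sum_cons hS]
  refine Fintype.sum_congr _ _ fun j => ?_
  rw [PLprobEvent, Finset.mul_sum]
  refine Fintype.sum_congr _ _ fun τ => ?_
  split_ifs <;> simp [PLProb_cons]

theorem PLprobEvent_congr (θ : ι → ℝ) (S : Finset ι) {E F : Ranking S → Prop}
    (h : ∀ σ, E σ ↔ F σ) : PLprobEvent θ S E = PLprobEvent θ S F := by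
  rw [funext fun σ => propext (h σ)]

theorem PLprobEvent_false (θ : ι → ℝ) (S : Finset ι) : PLprobEvent θ S (fun _ => False) = 0 := by
  simp [PLprobEvent]

theorem PLprobEvent_true (θ : ι → ℝ) (S : Finset ι) : PLprobEvent θ S (fun _ => True) = 1 := by
  induction hn : S.card generalizing S with
  | zero =>
    have : IsEmpty (Fin S.card) := hn ▸ Fin.isEmpty'
    have hσ (σ : Ranking S) : PLProb θ S σ = 1 := Finset.prod_of_isEmpty _
    simp [PLprobEvent, hσ, Ranking.card_ranking, hn]
  | succ n ih =>
    have hS : S.Nonempty := Finset.card_pos.1 (by omega)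
    have hZ : 0 < ∑ k ∈ S, exp (θ k) := Finset.sum_pos (fun k _ => exp_pos _) hS
    have hcard (j : S) : (S.erase j).card = n := by
      rw [Finset.card_erase_of_mem j.2, hn, Nat.add_sub_cancel]
    simp only [PLprobEvent_eq_sum_cons θ hS, ih _ (hcard _), mul_one]
    rw [Finset.sum_coe_sort S fun j => exp (θ j) / ∑ k ∈ S, exp (θ k), ← Finset.sum_div,
      div_self hZ.ne']

end PlackettLuce

section RankProbability

variable {ι : Type*} [DecidableEq ι]

/-- The membership proof sits inside the event, so that `rankProb θ A i r` makes sense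
(and vanishes) when `i ∉ A`; this lets it pass to `A.erase j` for every `j`. -/
noncomputable def rankProb (θ : ι → ℝ) (A : Finset ι) (i : ι) (r : ℕ) : ℝ :=
  PLprobEvent θ A fun σ => ∃ h : i ∈ A, rankOf σ ⟨i, h⟩ = r

theorem rankProb_eq (θ : ι → ℝ) {A : Finset ι} {i : ι} (hi : i ∈ A) (r : ℕ) :
    rankProb θ A i r = PLprobEvent θ A fun σ => rankOf σ ⟨i, hi⟩ = r :=
  PLprobEvent_congr θ A fun _ => ⟨fun ⟨_, h⟩ => h, fun h => ⟨hi, h⟩⟩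

theorem rankProb_of_notMem (θ : ι → ℝ) {A : Finset ι} {i : ι} (hi : i ∉ A) (r : ℕ) :
    rankProb θ A i r = 0 := by
  rw [rankProb, PLprobEvent_congr θ A (F := fun _ => False) fun _ =>
    ⟨fun ⟨h, _⟩ => hi h, False.elim⟩, PLprobEvent_false]

theorem rankProb_one (θ : ι → ℝ) {A : Finset ι} {i : ι} (hi : i ∈ A) :
    rankProb θ A i 1 = exp (θ i) / ∑ k ∈ A, exp (θ k) := by
  have hfirst (j : A) :
      (PLprobEvent θ (A.erase j) fun τ => ∃ h : i ∈ A, rankOf (Ranking.cons j.2 τ) ⟨i, h⟩ = 1) =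
        if (j : ι) = i then 1 else 0 := by
    split_ifs with hji
    · subst hji
      exact (PLprobEvent_congr θ _ fun τ => ⟨fun _ => trivial,
        fun _ => ⟨j.2, Ranking.rankOf_cons_self j.2 τ⟩⟩).trans (PLprobEvent_true θ _)
    · refine (PLprobEvent_congr θ _ fun τ => ⟨fun ⟨h, hr⟩ => ?_, False.elim⟩).trans
        (PLprobEvent_false θ _)
      rw [Ranking.rankOf_cons_of_ne j.2 h (Ne.symm hji), rankOf] at hr
      omega
  rw [rankProb, PLprobEvent_eq_sum_cons θ ⟨i, hi⟩]
  simp only [hfirst, mul_ite, mul_one, mul_zero]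
  rw [Finset.sum_coe_sort A fun j => if j = i then exp (θ j) / ∑ k ∈ A, exp (θ k) else 0,
    Finset.sum_ite_eq' A i, if_pos hi]

theorem rankProb_add_two (θ : ι → ℝ) {A : Finset ι} (hA : A.Nonempty) (i : ι) (r : ℕ) :
    rankProb θ A i (r + 2) =
      ∑ j ∈ A, (exp (θ j) / ∑ k ∈ A, exp (θ k)) * rankProb θ (A.erase j) i (r + 1) := by
  rw [rankProb, PLprobEvent_eq_sum_cons θ hA,
    ← Finset.sum_coe_sort A fun j => (exp (θ j) / ∑ k ∈ A, exp (θ k)) *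
      rankProb θ (A.erase j) i (r + 1)]
  refine Fintype.sum_congr _ _ fun j => congrArg _ (PLprobEvent_congr θ _ fun τ => ?_)
  by_cases hij : i = j
  · subst hij
    constructor
    · rintro ⟨_, hr⟩
      rw [Ranking.rankOf_cons_self] at hr
      omega
    · rintro ⟨h, _⟩
      exact absurd h (Finset.notMem_erase _ _)
  · constructor
    · rintro ⟨h, hr⟩
      rw [Ranking.rankOf_cons_of_ne j.2 h hij] at hr
      exact ⟨_, Nat.add_right_cancel hr⟩
    · rintro ⟨h, hr⟩
      exact ⟨Finset.mem_of_mem_erase h, by rw [Ranking.rankOf_cons_of_ne j.2 _ hij, hr]⟩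

end RankProbability

section RankBound

variable {ι : Type*} [DecidableEq ι]

omit [DecidableEq ι] in
theorem exp_mul_card_le_exp_mul_sum_exp {θ : ι → ℝ} {b : ℝ} {i : ι} (hi : |θ i| ≤ b)
    {Ω : Finset ι} (hΩ : ∀ k ∈ Ω, |θ k| ≤ b) :
    exp (θ i) * Ω.card ≤ exp (2 * b) * ∑ k ∈ Ω, exp (θ k) := by
  have hsum : Ω.card * exp (-b) ≤ ∑ k ∈ Ω, exp (θ k) := by
    simpa using Finset.card_nsmul_le_sum Ω _ _ fun k hk =>
      exp_le_exp.2 (neg_le_of_abs_le (hΩ k hk))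
  calc exp (θ i) * Ω.card ≤ exp b * Ω.card := by
        gcongr
        exact le_of_abs_le hi
    _ = exp (2 * b) * (Ω.card * exp (-b)) := by
        rw [mul_left_comm, ← exp_add]
        ring_nf
    _ ≤ exp (2 * b) * ∑ k ∈ Ω, exp (θ k) := by gcongr

omit [DecidableEq ι] in
theorem exp_div_avg_exp_le {θ : ι → ℝ} {b : ℝ} {i : ι} (hi : |θ i| ≤ b) {Ω : Finset ι}
    (hΩ : Ω.Nonempty) (hθΩ : ∀ k ∈ Ω, |θ k| ≤ b) :
    exp (θ i) / ((∑ k ∈ Ω, exp (θ k)) / Ω.card) ≤ exp (2 * b) := by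
  rw [div_div_eq_mul_div, div_le_iff₀ (Finset.sum_pos (fun _ _ => exp_pos _) hΩ)]
  exact exp_mul_card_le_exp_mul_sum_exp hi hθΩ

omit [DecidableEq ι] in
theorem mul_sum_exp_le_of_le_exp_div_avg_exp {θ : ι → ℝ} {i : ι} {Ω : Finset ι}
    (hΩ : Ω.Nonempty) {x : ℝ} (hx : x ≤ exp (θ i) / ((∑ k ∈ Ω, exp (θ k)) / Ω.card)) :
    x * ∑ k ∈ Ω, exp (θ k) ≤ Ω.card * exp (θ i) := by
  rwa [div_div_eq_mul_div, le_div_iff₀ (Finset.sum_pos (fun _ _ => exp_pos _) hΩ),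
    mul_comm (exp (θ i))] at hx

theorem div_add_le_div_add_of_mul_le {R e n α : ℝ} (hR : 0 ≤ R) (he : 0 < e) (hn : 0 < n)
    (hα : 0 ≤ α) (h : α * R ≤ n * e) : R / (e + R) ≤ n / (n + α) := by
  rw [div_le_div_iff₀ (by positivity) (by positivity)]
  linear_combination h

theorem rankProb_add_two_le (θ : ι → ℝ) {A : Finset ι} {i : ι} (hi : i ∈ A) (r : ℕ) {B : ℝ}
    (h : ∀ j ∈ A.erase i, rankProb θ (A.erase j) i (r + 1) ≤ B) :
    rankProb θ A i (r + 2) ≤ (∑ k ∈ A.erase i, exp (θ k)) / (∑ k ∈ A, exp (θ k)) * B := by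
  calc rankProb θ A i (r + 2)
      = ∑ j ∈ A.erase i, (exp (θ j) / ∑ k ∈ A, exp (θ k)) * rankProb θ (A.erase j) i (r + 1) := by
        rw [rankProb_add_two θ ⟨i, hi⟩, ← Finset.add_sum_erase A _ hi,
          rankProb_of_notMem θ (Finset.notMem_erase i A), mul_zero, zero_add]
    _ ≤ ∑ j ∈ A.erase i, (exp (θ j) / ∑ k ∈ A, exp (θ k)) * B :=
        Finset.sum_le_sum fun j hj => by gcongr; exact h j hj
    _ = (∑ k ∈ A.erase i, exp (θ k)) / (∑ k ∈ A, exp (θ k)) * B := by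
        rw [← Finset.sum_mul, Finset.sum_div]

theorem rankProb_le_prod (θ : ι → ℝ) {b : ℝ} {i : ι} {c : ℕ} {α : ℝ} (hα0 : 0 ≤ α) :
    ∀ {A : Finset ι}, i ∈ A → (∀ k ∈ A, |θ k| ≤ b) → c < A.card →
      (∀ Ω ⊆ A.erase i, c < Ω.card → α * ∑ k ∈ Ω, exp (θ k) ≤ Ω.card * exp (θ i)) →
      rankProb θ A i (A.card - c) ≤
        exp (2 * b) / (c + 1) * ∏ s ∈ Finset.Ico (c + 1) A.card, (s : ℝ) / (s + α) := by
  intro A hi hθb hc hα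
  obtain ⟨m, hm⟩ := Nat.exists_eq_add_of_lt hc
  induction m generalizing A with
  | zero =>
    have hZ : 0 < ∑ k ∈ A, exp (θ k) := Finset.sum_pos (fun k _ => exp_pos _) ⟨i, hi⟩
    rw [hm, show c + 0 + 1 - c = 1 by omega, rankProb_one θ hi, Finset.Ico_self,
      Finset.prod_empty, mul_one, div_le_div_iff₀ hZ (by positivity)]
    have := exp_mul_card_le_exp_mul_sum_exp (hθb i hi) hθb
    rw [hm] at this
    push_cast at this
    linarith
  | succ m ih =>
    set B := exp (2 * b) / (c + 1) * ∏ s ∈ Finset.Ico (c + 1) (c + m + 1), (s : ℝ) / (s + α)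
      with hB_def
    have hcard : (A.erase i).card = c + m + 1 := by rw [Finset.card_erase_of_mem hi, hm]; rfl
    have hrest (j) (hj : j ∈ A.erase i) : rankProb θ (A.erase j) i (m + 1) ≤ B := by
      obtain ⟨hji, hjA⟩ := Finset.mem_erase.1 hj
      have hcard' : (A.erase j).card = c + m + 1 := by
        rw [Finset.card_erase_of_mem hjA, hm]; rfl
      have := ih (Finset.mem_erase.2 ⟨Ne.symm hji, hi⟩)
        (fun k hk => hθb k (Finset.mem_of_mem_erase hk)) (by omega)
        (fun Ω hΩ => hα Ω (hΩ.trans (Finset.erase_subset_erase _ (Finset.erase_subset _ _))))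
        hcard'
      rwa [hcard', show c + m + 1 - c = m + 1 by omega] at this
    have havoid : (∑ k ∈ A.erase i, exp (θ k)) / (∑ k ∈ A, exp (θ k)) ≤
        ((c + m + 1 : ℕ) : ℝ) / ((c + m + 1 : ℕ) + α) := by
      rw [← Finset.add_sum_erase A _ hi]
      refine div_add_le_div_add_of_mul_le (Finset.sum_nonneg fun _ _ => (exp_pos _).le)
        (exp_pos _) (by positivity) hα0 ?_
      simpa [hcard] using hα (A.erase i) subset_rfl (by omega)
    calc rankProb θ A i (A.card - c)
        = rankProb θ A i (m + 2) := by rw [hm, show c + (m + 1) + 1 - c = m + 2 by omega]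
      _ ≤ (∑ k ∈ A.erase i, exp (θ k)) / (∑ k ∈ A, exp (θ k)) * B :=
          rankProb_add_two_le θ hi m hrest
      _ ≤ ((c + m + 1 : ℕ) : ℝ) / ((c + m + 1 : ℕ) + α) * B := by gcongr
      _ = exp (2 * b) / (c + 1) * ∏ s ∈ Finset.Ico (c + 1) A.card, (s : ℝ) / (s + α) := by
          rw [hm, ← add_assoc, Finset.prod_Ico_succ_top (by omega : c + 1 ≤ c + m + 1), hB_def]
          push_cast
          ring

end RankBound

section Arithmetic

theorem prod_Ico_div_add_eq_prod_range {u v : ℕ} (hu : 0 < u) (huv : u ≤ v) (a : ℕ) :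
    ∏ s ∈ Finset.Ico u v, (s : ℝ) / (s + a) =
      ∏ j ∈ Finset.range a, ((u : ℝ) + j) / (v + j) := by
  have hrange (w : ℕ) :
      ∏ j ∈ Finset.range a, ((w : ℝ) + j) = ∏ s ∈ Finset.Ico w (w + a), (s : ℝ) := by
    rw [Finset.prod_Ico_eq_prod_range, Nat.add_sub_cancel_left]
    push_cast
    rfl
  have hshift :
      ∏ s ∈ Finset.Ico u v, ((s : ℝ) + a) = ∏ s ∈ Finset.Ico (u + a) (v + a), (s : ℝ) := by
    rw [← Finset.prod_Ico_add' (fun s : ℕ => (s : ℝ))]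
    push_cast
    rfl
  -- both sides of `hcross` are `∏ s ∈ Ico u (v + a), s`
  have hcross : (∏ s ∈ Finset.Ico u v, (s : ℝ)) * ∏ j ∈ Finset.range a, ((v : ℝ) + j) =
      (∏ j ∈ Finset.range a, ((u : ℝ) + j)) * ∏ s ∈ Finset.Ico u v, ((s : ℝ) + a) := by
    rw [hrange, hrange, hshift, Finset.prod_Ico_consecutive _ huv (by omega),
      Finset.prod_Ico_consecutive _ (by omega) (by omega)]
  have hv : 0 < v := hu.trans_le huv
  rw [Finset.prod_div_distrib, Finset.prod_div_distrib, div_eq_div_iff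
    (Finset.prod_pos fun s hs => by have := hu.trans_le (Finset.mem_Ico.1 hs).1; positivity).ne'
    (Finset.prod_pos fun j _ => by positivity).ne']
  linear_combination hcross

theorem prod_Ico_div_add_le {c κ : ℕ} (hcκ : c < κ) (a : ℕ) :
    ∏ s ∈ Finset.Ico (c + 1) κ, (s : ℝ) / (s + a) ≤
      (((c : ℝ) + a) / (κ + a)) ^ a * ((κ + a) / κ) := by
  have hκ : (0 : ℝ) < κ := by exact_mod_cast hcκ.trans_le' (Nat.zero_le c)
  have hcκ' : (c : ℝ) < κ := by exact_mod_cast hcκ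
  have hfactor (j : ℕ) (hj : j ∈ Finset.range a) :
      ((c + 1 : ℕ) + (j : ℝ)) / ((κ + 1 : ℕ) + j) ≤ ((c : ℝ) + a) / (κ + a) := by
    have hja : (j : ℝ) + 1 ≤ a := by exact_mod_cast Finset.mem_range.1 hj
    rw [div_le_div_iff₀ (by positivity) (by positivity)]
    push_cast
    nlinarith
  have hext : ∏ s ∈ Finset.Ico (c + 1) (κ + 1), (s : ℝ) / (s + a) =
      (∏ s ∈ Finset.Ico (c + 1) κ, (s : ℝ) / (s + a)) * (κ / (κ + a)) :=
    Finset.prod_Ico_succ_top (by omega) _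
  calc ∏ s ∈ Finset.Ico (c + 1) κ, (s : ℝ) / (s + a)
      = (∏ s ∈ Finset.Ico (c + 1) (κ + 1), (s : ℝ) / (s + a)) * ((κ + a) / κ) := by
        rw [hext, mul_assoc, div_mul_div_comm, mul_comm (κ : ℝ), div_self (by positivity),
          mul_one]
    _ = (∏ j ∈ Finset.range a, ((c + 1 : ℕ) + (j : ℝ)) / ((κ + 1 : ℕ) + j)) *
          ((κ + a) / κ) := by
        rw [prod_Ico_div_add_eq_prod_range (by omega) (by omega)]
    _ ≤ (((c : ℝ) + a) / (κ + a)) ^ a * ((κ + a) / κ) := by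
        gcongr
        calc ∏ j ∈ Finset.range a, ((c + 1 : ℕ) + (j : ℝ)) / ((κ + 1 : ℕ) + j)
            ≤ ∏ _j ∈ Finset.range a, ((c : ℝ) + a) / (κ + a) :=
              Finset.prod_le_prod (fun _ _ => by positivity) hfactor
          _ = (((c : ℝ) + a) / (κ + a)) ^ a := by rw [Finset.prod_const, Finset.card_range]

theorem exp_div_mul_prod_Ico_le {κ ℓ : ℕ} (hℓ0 : 0 < ℓ) (hℓ : ℓ < κ) {a : ℕ} {b : ℝ} (hb : 0 ≤ b)
    (ha : (a : ℝ) ≤ exp (2 * b)) :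
    exp (2 * b) / ((κ - ℓ : ℕ) + 1) * ∏ s ∈ Finset.Ico (κ - ℓ + 1) κ, (s : ℝ) / (s + a) ≤
      exp (6 * b) / κ * (1 - (ℓ : ℝ) / (κ + a)) ^ ((a : ℤ) - 1) := by
  have hc : ((κ - ℓ : ℕ) : ℝ) = κ - ℓ := Nat.cast_sub hℓ.le
  have hcpos : (0 : ℝ) < (κ - ℓ : ℕ) := by exact_mod_cast Nat.sub_pos_of_lt hℓ
  have hκ : (0 : ℝ) < κ := by exact_mod_cast hℓ.trans_le' (Nat.zero_le ℓ)
  have hX : 1 - (ℓ : ℝ) / (κ + a) = ((κ - ℓ : ℕ) + a) / (κ + a) := by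
    rw [hc]
    field_simp
    ring
  have hexp : exp (2 * b) * ((κ - ℓ : ℕ) + a) ≤ exp (6 * b) * ((κ - ℓ : ℕ) + 1) := by
    have h26 : exp (2 * b) ≤ exp (6 * b) := exp_le_exp.2 (by linarith)
    have h46 : exp (2 * b) * exp (2 * b) ≤ exp (6 * b) := by
      rw [← exp_add]
      exact exp_le_exp.2 (by linarith)
    nlinarith [exp_pos (2 * b)]
  calc exp (2 * b) / ((κ - ℓ : ℕ) + 1) * ∏ s ∈ Finset.Ico (κ - ℓ + 1) κ, (s : ℝ) / (s + a)
      ≤ exp (2 * b) / ((κ - ℓ : ℕ) + 1) *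
          (((((κ - ℓ : ℕ) : ℝ) + a) / (κ + a)) ^ a * ((κ + a) / κ)) := by
        gcongr
        exact prod_Ico_div_add_le (by omega) a
    _ ≤ exp (6 * b) / ((κ - ℓ : ℕ) + a) *
          (((((κ - ℓ : ℕ) : ℝ) + a) / (κ + a)) ^ a * ((κ + a) / κ)) := by
        gcongr ?_ * _
        rw [div_le_div_iff₀ (by positivity) (by positivity)]
        linarith
    _ = exp (6 * b) / κ * (1 - (ℓ : ℝ) / (κ + a)) ^ ((a : ℤ) - 1) := by
        rw [hX, zpow_sub_one₀ (by positivity), zpow_natCast]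
        field_simp

theorem div_mul_one_sub_div_zpow_le {C κ ℓ : ℝ} (hC : 0 ≤ C) (hℓ : 0 ≤ ℓ) (hℓκ : ℓ < κ)
    (a : ℕ) : C / κ * (1 - ℓ / (κ + a)) ^ ((a : ℤ) - 1) ≤ C / (κ - ℓ) := by
  have hκ : 0 < κ := hℓ.trans_lt hℓκ
  have hc : 0 < κ - ℓ := sub_pos.2 hℓκ
  have hκa : 0 < κ + a := by positivity
  have hX : 1 - ℓ / (κ + a) = (κ - ℓ + a) / (κ + a) := by
    field_simp
    ring
  have hX0 : 0 < (κ - ℓ + a) / (κ + a) := by positivity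
  have hX1 : (κ - ℓ + a) / (κ + a) ≤ 1 := by
    rw [div_le_one hκa]
    linarith
  calc C / κ * (1 - ℓ / (κ + a)) ^ ((a : ℤ) - 1)
      ≤ C / κ * ((κ - ℓ + a) / (κ + a))⁻¹ := by
        rw [hX, zpow_sub_one₀ hX0.ne', zpow_natCast]
        gcongr
        exact mul_le_of_le_one_left (by positivity) (pow_le_one₀ hX0.le hX1)
    _ ≤ C / κ * (κ / (κ - ℓ)) := by
        gcongr
        rw [inv_div, div_le_div_iff₀ (by positivity) hc]
        nlinarith [(Nat.cast_nonneg a : (0 : ℝ) ≤ a)]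
    _ = C / (κ - ℓ) := by
        field_simp

end Arithmetic

theorem statement_14 {ι : Type*} [DecidableEq ι]
    (θ : ι → ℝ) (S : Finset ι) (b : ℝ)
    (hθb : ∀ i ∈ S, |θ i| ≤ b)
    (i : ι) (hi : i ∈ S)
    (ℓ : ℕ) (hℓ1 : 1 ≤ ℓ) (hℓ2 : ℓ ≤ S.card - 1)
    (αt : ℝ)
    (hαt : IsLeast { x : ℝ | ∃ ℓ' : ℕ, 1 ≤ ℓ' ∧ ℓ' ≤ ℓ ∧
        ∃ Ω : Finset ι, Ω ⊆ S \ {i} ∧ Ω.card = S.card - ℓ' + 1 ∧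
          x = Real.exp (θ i) / ((∑ k ∈ Ω, Real.exp (θ k)) / (Ω.card : ℝ)) } αt) :
    PLprobEvent θ S (fun σ => rankOf σ ⟨i, hi⟩ = ℓ) ≤
      (Real.exp (6 * b) / (S.card : ℝ)) *
        (1 - (ℓ : ℝ) / ((S.card : ℝ) + (⌊αt⌋ : ℝ))) ^ (⌊αt⌋ - 1)
    ∧ (Real.exp (6 * b) / (S.card : ℝ)) *
        (1 - (ℓ : ℝ) / ((S.card : ℝ) + (⌊αt⌋ : ℝ))) ^ (⌊αt⌋ - 1) ≤
      Real.exp (6 * b) / ((S.card : ℝ) - ℓ) := by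
  obtain ⟨⟨ℓ₀, -, -, Ω₀, hΩ₀, hΩ₀card, hαt_eq⟩, hleast⟩ := hαt
  have hb : 0 ≤ b := (abs_nonneg _).trans (hθb i hi)
  have hℓκ : ℓ < S.card := by omega
  have hΩ₀ne : Ω₀.Nonempty := Finset.card_pos.1 (by omega)
  have hαt_pos : 0 < αt := by
    rw [hαt_eq]
    positivity
  have hαt_le : αt ≤ exp (2 * b) := hαt_eq ▸ exp_div_avg_exp_le (hθb i hi) hΩ₀ne
    fun k hk => hθb k (Finset.sdiff_subset (hΩ₀ hk))
  obtain ⟨a, ha⟩ := Int.eq_ofNat_of_zero_le (Int.floor_nonneg.2 hαt_pos.le)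
  have haα : (a : ℝ) ≤ αt := by exact_mod_cast ha ▸ Int.floor_le αt
  have hα : ∀ Ω ⊆ S.erase i, S.card - ℓ < Ω.card →
      (a : ℝ) * ∑ k ∈ Ω, exp (θ k) ≤ Ω.card * exp (θ i) := by
    intro Ω hΩ hcard
    have hΩS : Ω.card ≤ S.card - 1 := Finset.card_erase_of_mem hi ▸ Finset.card_le_card hΩ
    exact mul_sum_exp_le_of_le_exp_div_avg_exp (Finset.card_pos.1 (by omega))
      (haα.trans (hleast ⟨S.card + 1 - Ω.card, by omega, by omega, Ω,
        by rwa [Finset.sdiff_singleton_eq_erase], by omega, rfl⟩))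
  have hrank := rankProb_le_prod θ (Nat.cast_nonneg a) hi hθb (Nat.sub_lt_self hℓ1 hℓκ.le) hα
  rw [rankProb_eq θ hi, Nat.sub_sub_self hℓκ.le] at hrank
  rw [ha, Int.cast_natCast]
  exact ⟨hrank.trans (exp_div_mul_prod_Ico_le hℓ1 hℓκ hb (haα.trans hαt_le)),
    div_mul_one_sub_div_zpow_le (exp_pos _).le (Nat.cast_nonneg ℓ) (by exact_mod_cast hℓκ) a⟩
end

section
/- Let σ be a ranking over a set S of κ items drawn from the PL model with parameter θ, and suppose max_{i,i′∈S} |θ_i − θ_{i′}| ≤ 2b. Then for every item i ∈ S and every 1 ≤ ℓ ≤ κ − 1, P[σ^{−1}(i) ≤ ℓ] ≥ e^{−2b} · ℓ/κ. -/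
open Real

/-!
Condition on the item ranked first. With weights `w = exp ∘ θ`, all weight ratios are at most
`C = exp (2 b)`, so item `i` comes first with probability `s = w i / ∑ w ≥ 1 / (C κ)`. Otherwise
the rest of the ranking is again Plackett–Luce on `κ - 1` items, in which `i` must reach the top
`ℓ - 1`. By induction on `κ` the probability is at least
`s + (1 - s) (ℓ - 1) / (C (κ - 1)) ≥ ℓ / (C κ)`, the last step using only `C ≥ 1`.
-/

open Finset Equiv Equiv.Perm

lemma succ_div_le_add_mul_div {C s : ℝ} {m N : ℕ} (hC : 1 ≤ C) (hmN : m ≤ N)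
    (hs : 1 / (C * (N + 1)) ≤ s) :
    (m + 1) / (C * (N + 1)) ≤ s + (1 - s) * (m / (C * N)) := by
  rcases Nat.eq_zero_or_pos m with rfl | hm
  · simpa using hs
  have hN : (0 : ℝ) < N := by exact_mod_cast hm.trans_le hmN
  have hmCN : (m : ℝ) ≤ C * N :=
    (Nat.cast_le.2 hmN).trans (le_mul_of_one_le_left hN.le hC)
  have hs' : 1 ≤ s * (C * (N + 1)) := by rwa [div_le_iff₀ (by positivity)] at hs
  rw [show s + (1 - s) * (m / (C * N)) = (s * (C * N) + (1 - s) * m) / (C * N) by field_simp,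
    div_le_div_iff₀ (by positivity) (by positivity)]
  nlinarith [mul_nonneg (sub_nonneg.2 hs') (sub_nonneg.2 hmCN),
    mul_nonneg (sub_nonneg.2 hC) (Nat.cast_nonneg m : (0 : ℝ) ≤ m)]

namespace PlackettLuce

variable {n : ℕ}

/-- `σ a` is the item placed at (0-based) position `a`, as for `Ranking`. -/
noncomputable def prob (w : Fin n → ℝ) (σ : Perm (Fin n)) : ℝ :=
  ∏ a, (w (σ a) / ∑ a' ∈ univ.filter (fun a' => a ≤ a'), w (σ a'))

noncomputable def probInTop (w : Fin n → ℝ) (i : Fin n) (ℓ : ℕ) : ℝ :=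
  ∑ σ : Perm (Fin n), if ((σ⁻¹ i : Fin n) : ℕ) < ℓ then prob w σ else 0

lemma prob_nonneg {w : Fin n → ℝ} (hw : ∀ x, 0 < w x) (σ : Perm (Fin n)) : 0 ≤ prob w σ :=
  prod_nonneg fun _ _ => div_nonneg (hw _).le (sum_nonneg fun _ _ => (hw _).le)

lemma probInTop_nonneg {w : Fin n → ℝ} (hw : ∀ x, 0 < w x) (i : Fin n) (ℓ : ℕ) :
    0 ≤ probInTop w i ℓ :=
  sum_nonneg fun σ _ => by split <;> first | exact prob_nonneg hw σ | rfl

lemma prob_decomposeFin_symm (w : Fin (n + 1) → ℝ) (p : Fin (n + 1)) (e : Perm (Fin n)) :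
    prob w (decomposeFin.symm (p, e)) =
      (w p / ∑ x, w x) * prob (fun j => w (swap 0 p j.succ)) e := by
  rw [prob, Fin.prod_univ_succ, decomposeFin_symm_apply_zero,
    filter_true_of_mem fun x _ => Fin.zero_le x, Equiv.sum_comp]
  congr 1
  refine prod_congr rfl fun a _ => ?_
  simp only [filter_le_eq_Ici, Fin.sum_Ici_succ, decomposeFin_symm_apply_succ]

lemma sum_decomposeFin_symm {M : Type*} [AddCommMonoid M] (f : Perm (Fin (n + 1)) → M) :
    ∑ σ, f σ = ∑ p, ∑ e, f (decomposeFin.symm (p, e)) := by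
  rw [← Equiv.sum_comp decomposeFin.symm, Fintype.sum_prod_type]

lemma sum_prob : ∀ {n : ℕ} {w : Fin n → ℝ}, (∀ x, 0 < w x) → ∑ σ, prob w σ = 1
  | 0, w, _ => by simp [prob]
  | n + 1, w, hw => by
    have hW : 0 < ∑ x, w x := sum_pos (fun x _ => hw x) univ_nonempty
    simp_rw [sum_decomposeFin_symm, prob_decomposeFin_symm, ← mul_sum,
      sum_prob fun _ => hw _, mul_one, ← sum_div, div_self hW.ne']

lemma sum_decomposeFin_symm_self_inTop {w : Fin (n + 1) → ℝ} (hw : ∀ x, 0 < w x)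
    (i : Fin (n + 1)) (m : ℕ) :
    ∑ e : Perm (Fin n), (if (((decomposeFin.symm (i, e))⁻¹ i : Fin (n + 1)) : ℕ) < m + 1
      then prob w (decomposeFin.symm (i, e)) else 0) = w i / ∑ x, w x := by
  have hfirst (e : Perm (Fin n)) : (decomposeFin.symm (i, e))⁻¹ i = 0 := by
    rw [inv_eq_iff_eq, decomposeFin_symm_apply_zero]
  simp only [hfirst, Fin.val_zero, m.succ_pos, if_true, prob_decomposeFin_symm, ← mul_sum,
    sum_prob fun _ => hw _, mul_one]

lemma sum_decomposeFin_symm_inTop_of_succ_eq {w : Fin (n + 1) → ℝ} {i p : Fin (n + 1)}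
    {t : Fin n} (ht : t.succ = swap 0 p i) (m : ℕ) :
    ∑ e : Perm (Fin n), (if (((decomposeFin.symm (p, e))⁻¹ i : Fin (n + 1)) : ℕ) < m + 1
      then prob w (decomposeFin.symm (p, e)) else 0) =
      (w p / ∑ x, w x) * probInTop (fun j => w (swap 0 p j.succ)) t m := by
  have hpos (e : Perm (Fin n)) : (decomposeFin.symm (p, e))⁻¹ i = (e⁻¹ t).succ := by
    rw [inv_eq_iff_eq, decomposeFin_symm_apply_succ, coe_inv, apply_symm_apply, ht,
      swap_apply_self]
  simp_rw [probInTop, mul_sum, mul_ite, mul_zero, hpos, Fin.val_succ, Nat.add_lt_add_iff_right,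
    prob_decomposeFin_symm]

theorem div_le_probInTop : ∀ {n : ℕ} {w : Fin n → ℝ} {C : ℝ}, (∀ x, 0 < w x) →
    (∀ x y, w x ≤ C * w y) → ∀ (i : Fin n) {ℓ : ℕ}, ℓ ≤ n → ℓ / (C * n) ≤ probInTop w i ℓ
  | _, _, _, hw, _, i, 0, _ => by simpa using probInTop_nonneg hw i 0
  | n + 1, w, C, hw, hC, i, m + 1, hm => by
    have hC1 : 1 ≤ C := le_of_mul_le_mul_right (by simpa using hC i i) (hw i)
    set W := ∑ x, w x
    have hW : 0 < W := sum_pos (fun x _ => hw x) univ_nonempty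
    have hfirst : 1 / (C * (n + 1)) ≤ w i / W := by
      have : W ≤ (n + 1) * (C * w i) := by
        simpa using sum_le_card_nsmul univ w (C * w i) fun x _ => hC x i
      rw [div_le_div_iff₀ (by positivity) hW]
      linarith
    have hrest : ∑ p ∈ univ.erase i, w p / W = 1 - w i / W := by
      rw [← sum_div, sum_erase_eq_sub (mem_univ i), sub_div, div_self hW.ne']
    have htail (p : Fin (n + 1)) (hp : p ∈ univ.erase i) : w p / W * (m / (C * n)) ≤
        ∑ e : Perm (Fin n), (if (((decomposeFin.symm (p, e))⁻¹ i : Fin (n + 1)) : ℕ) < m + 1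
          then prob w (decomposeFin.symm (p, e)) else 0) := by
      obtain ⟨t, ht⟩ := Fin.exists_succ_eq.2 fun h =>
        (mem_erase.1 hp).1 ((swap_apply_eq_iff.1 h).trans (swap_apply_left 0 p)).symm
      rw [sum_decomposeFin_symm_inTop_of_succ_eq ht]
      exact mul_le_mul_of_nonneg_left
        (div_le_probInTop (fun _ => hw _) (fun _ _ => hC _ _) t (by omega))
        (div_nonneg (hw p).le hW.le)
    calc ((m + 1 : ℕ) : ℝ) / (C * (n + 1 : ℕ))
        ≤ w i / W + (1 - w i / W) * (m / (C * n)) := by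
          push_cast
          exact succ_div_le_add_mul_div hC1 (by omega) hfirst
      _ = w i / W + ∑ p ∈ univ.erase i, w p / W * (m / (C * n)) := by rw [← sum_mul, hrest]
      _ ≤ probInTop w i (m + 1) := by
          rw [probInTop, sum_decomposeFin_symm, ← add_sum_erase _ _ (mem_univ i),
            sum_decomposeFin_symm_self_inTop hw]
          exact add_le_add_right (sum_le_sum htail) _

end PlackettLuce

lemma PLprobEvent_rankOf_le_eq_probInTop {ι : Type*} [DecidableEq ι] (θ : ι → ℝ) (S : Finset ι)
    (e : Fin S.card ≃ S) (i : S) (ℓ : ℕ) :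
    PLprobEvent θ S (fun σ => rankOf σ i ≤ ℓ) =
      PlackettLuce.probInTop (fun j => Real.exp (θ (e j))) (e.symm i) ℓ :=
  -- termwise definitional: `rankOf` adds one to the position, and `a < ℓ` is `a + 1 ≤ ℓ` on `ℕ`
  (Fintype.sum_equiv ((Equiv.refl _).equivCongr e) _ _ fun _ => by congr 1).symm

theorem statement_15_general {ι : Type*} [DecidableEq ι]
    (θ : ι → ℝ) (S : Finset ι) (b : ℝ)
    (hθb : ∀ i ∈ S, ∀ i' ∈ S, |θ i - θ i'| ≤ 2 * b)
    (i : ι) (hi : i ∈ S)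
    (ℓ : ℕ) (hℓ2 : ℓ ≤ S.card - 1) :
    Real.exp (-(2 * b)) * (ℓ : ℝ) / (S.card : ℝ) ≤
      PLprobEvent θ S (fun σ => rankOf σ ⟨i, hi⟩ ≤ ℓ) := by
  set e := S.equivFin.symm
  have hratio (x y : Fin S.card) :
      Real.exp (θ (e x)) ≤ Real.exp (2 * b) * Real.exp (θ (e y)) := by
    rw [← Real.exp_add, Real.exp_le_exp]
    linarith [(abs_le.1 (hθb _ (e x).2 _ (e y).2)).2]
  rw [PLprobEvent_rankOf_le_eq_probInTop θ S e, Real.exp_neg, inv_mul_eq_div, div_div]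
  exact PlackettLuce.div_le_probInTop (fun _ => Real.exp_pos _) hratio _ (by omega)

theorem statement_15 {ι : Type*} [DecidableEq ι]
    (θ : ι → ℝ) (S : Finset ι) (b : ℝ)
    (hθb : ∀ i ∈ S, ∀ i' ∈ S, |θ i - θ i'| ≤ 2 * b)
    (i : ι) (hi : i ∈ S)
    (ℓ : ℕ) (hℓ1 : 1 ≤ ℓ) (hℓ2 : ℓ ≤ S.card - 1) :
    Real.exp (-(2 * b)) * (ℓ : ℝ) / (S.card : ℝ) ≤
      PLprobEvent θ S (fun σ => rankOf σ ⟨i, hi⟩ ≤ ℓ) :=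
  statement_15_general θ S b hθb i hi ℓ hℓ2
end

section
/- Let σ be a ranking over a finite set S drawn from the PL model with parameter θ. Let i_{min1} = argmin_{i∈S} θ_i and i_{min2} = argmin_{i∈S∖{i_{min1}}} θ_i be the two items of smallest weight. Then for all positions 1 ≤ i₁, i₂ ≤ |S| with i₁ ≠ i₂, P[σ^{−1}(i_{min1}) = i₁ and σ^{−1}(i_{min2}) = i₂] ≥ P[σ^{−1}(i_{min1}) = 1 and σ^{−1}(i_{min2}) = 2]. -/
open Real

section myauxx
open Finset


variable {κ : ℕ}

lemma my_key_sum (hκ : 1 < κ) (τ : Equiv.Perm (Fin κ))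
    (hτ : ∀ b : Fin κ, 2 ≤ b.val → (τ b).val ≤ b.val)
    (x : Fin κ → ℝ)
    (h0 : ∀ b, x ⟨0, by omega⟩ ≤ x b)
    (h1 : ∀ b : Fin κ, 2 ≤ b.val → x ⟨1, hκ⟩ ≤ x b)
    (a : Fin κ) :
    ∑ b ∈ univ.filter (fun b => a ≤ τ b), x b ≤
      ∑ b ∈ univ.filter (fun b => a ≤ b), x b := by
  classical
  set z0 : Fin κ := ⟨0, by omega⟩ with hz0
  set z1 : Fin κ := ⟨1, hκ⟩ with hz1
  set A : Finset (Fin κ) := univ.filter (fun b => a ≤ τ b) with hA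
  set B : Finset (Fin κ) := univ.filter (fun b => a ≤ b) with hB
  have hAcard : A.card = B.card := by
    have : A = B.image τ.symm := by
      ext b
      simp [hA, hB, Finset.mem_image]
      constructor
      · intro h; exact ⟨τ b, h, by simp⟩
      · rintro ⟨c, hc, rfl⟩; simpa using hc
    rw [this, Finset.card_image_of_injective _ (Equiv.injective _)]
  have hsub : A \ B ⊆ {z0, z1} := by
    intro b hb
    simp only [Finset.mem_sdiff, hA, hB, Finset.mem_filter, Finset.mem_univ, true_and,
      not_le] at hb
    obtain ⟨hb1, hb2⟩ := hb
    by_contra hmem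
    simp only [Finset.mem_insert, Finset.mem_singleton] at hmem
    push_neg at hmem
    have hbv : 2 ≤ b.val := by
      rcases hmem with ⟨hm0, hm1⟩
      have : b.val ≠ 0 := fun h => hm0 (Fin.ext h)
      have : b.val ≠ 1 := fun h => hm1 (Fin.ext h)
      omega
    have := hτ b hbv
    have : (τ b) < a := lt_of_le_of_lt (by exact Fin.le_def.mpr (hτ b hbv)) hb2
    exact absurd hb1 (not_le.mpr this)
  have hdcard : (A \ B).card = (B \ A).card := Finset.card_sdiff_comm hAcard
  have key : ∑ b ∈ A \ B, x b ≤ ∑ b ∈ B \ A, x b := by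
    have hle2 : (A \ B).card ≤ 2 := le_trans (Finset.card_le_card hsub)
      (le_trans (Finset.card_insert_le _ _) (by simp))
    -- helpers about elements of B \ A
    have hBA : ∀ f ∈ B \ A, a ≤ f := by
      intro f hf
      simp only [Finset.mem_sdiff, hB, Finset.mem_filter, Finset.mem_univ, true_and] at hf
      exact hf.1
    have ha2 : z1 ∈ A \ B → 2 ≤ a.val := by
      intro h
      simp only [Finset.mem_sdiff, hA, hB, Finset.mem_filter, Finset.mem_univ, true_and,
        not_le] at h
      have := h.2
      simp [Fin.lt_def, hz1] at this
      omega
    have hz01 : z0 ≠ z1 := by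
      intro h; rw [Fin.ext_iff] at h; simp [hz0, hz1] at h
    interval_cases hc : (A \ B).card
    · rw [Finset.card_eq_zero.mp hc, Finset.card_eq_zero.mp hdcard.symm]
    · obtain ⟨e, he⟩ := Finset.card_eq_one.mp hc
      obtain ⟨f, hf⟩ := Finset.card_eq_one.mp hdcard.symm
      rw [he, hf, Finset.sum_singleton, Finset.sum_singleton]
      have hfB : f ∈ B \ A := by rw [hf]; exact Finset.mem_singleton_self f
      have hemem : e ∈ {z0, z1} := hsub (he ▸ Finset.mem_singleton_self e)
      simp only [Finset.mem_insert, Finset.mem_singleton] at hemem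
      rcases hemem with rfl | rfl
      · exact h0 f
      · have ha : 2 ≤ a.val := ha2 (by rw [he]; exact Finset.mem_singleton_self _)
        have hval : a.val ≤ f.val := Fin.le_def.mp (hBA f hfB)
        exact h1 f (by omega)
    · have hAB : A \ B = {z0, z1} := Finset.eq_of_subset_of_card_le hsub
        (by rw [hc, Finset.card_insert_of_notMem (by simpa using hz01),
          Finset.card_singleton])
      obtain ⟨f, g, hfg, hf⟩ := Finset.card_eq_two.mp hdcard.symm
      have hfB : f ∈ B \ A := by rw [hf]; exact Finset.mem_insert_self f {g}
      have hgB : g ∈ B \ A := by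
        rw [hf]; exact Finset.mem_insert_of_mem (Finset.mem_singleton_self g)
      have ha : 2 ≤ a.val := ha2 (by
        rw [hAB]; exact Finset.mem_insert_of_mem (Finset.mem_singleton_self z1))
      have hfval : a.val ≤ f.val := Fin.le_def.mp (hBA f hfB)
      have hgval : a.val ≤ g.val := Fin.le_def.mp (hBA g hgB)
      rw [hAB, hf, Finset.sum_pair hz01, Finset.sum_pair hfg]
      exact add_le_add (h0 f) (h1 g (by omega))
  calc ∑ b ∈ A, x b = ∑ b ∈ A ∩ B, x b + ∑ b ∈ A \ B, x b :=
        (Finset.sum_inter_add_sum_sdiff A B x).symm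
    _ ≤ ∑ b ∈ B ∩ A, x b + ∑ b ∈ B \ A, x b := by
        rw [Finset.inter_comm]; exact add_le_add le_rfl key
    _ = ∑ b ∈ B, x b := Finset.sum_inter_add_sum_sdiff B A x



lemma my_tau_exists (hκ : 1 < κ) (p1 p2 : Fin κ) (hne : p1 ≠ p2) :
    ∃ τ : Equiv.Perm (Fin κ), τ ⟨0, by omega⟩ = p1 ∧ τ ⟨1, hκ⟩ = p2 ∧
      ∀ b : Fin κ, 2 ≤ b.val → (τ b).val ≤ b.val := by
  set z0 : Fin κ := ⟨0, by omega⟩ with hz0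
  set z1 : Fin κ := ⟨1, hκ⟩ with hz1
  have hz01 : z0 ≠ z1 := by intro h; rw [Fin.ext_iff] at h; simp [hz0, hz1] at h
  set s1 : Equiv.Perm (Fin κ) := Equiv.swap z0 p1 with hs1
  set q : Fin κ := s1 p2 with hq
  have hqz0 : q ≠ z0 := by
    intro h
    apply hne
    have := congrArg s1 h
    rw [hq, Equiv.swap_apply_self] at this
    rw [this, hs1, Equiv.swap_apply_left]
  refine ⟨(Equiv.swap z1 q).trans s1, ?_, ?_, ?_⟩
  · show s1 (Equiv.swap z1 q z0) = p1
    rw [Equiv.swap_apply_of_ne_of_ne hz01 (Ne.symm hqz0), hs1, Equiv.swap_apply_left]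
  · show s1 (Equiv.swap z1 q z1) = p2
    rw [Equiv.swap_apply_left, hq, Equiv.swap_apply_self]
  · intro b hb
    show (s1 (Equiv.swap z1 q b)).val ≤ b.val
    have hbz0 : b ≠ z0 := by intro h; rw [h, hz0] at hb; simp at hb
    have hbz1 : b ≠ z1 := by intro h; rw [h, hz1] at hb; simp at hb
    by_cases hbq : b = q
    · subst hbq
      rw [Equiv.swap_apply_right]
      by_cases hp1 : z1 = p1
      · rw [hs1, ← hp1, Equiv.swap_apply_right]; simp [hz0]
      · rw [hs1, Equiv.swap_apply_of_ne_of_ne (Ne.symm hz01) hp1]; simp [hz1]; omega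
    · rw [Equiv.swap_apply_of_ne_of_ne hbz1 hbq]
      by_cases hp1 : b = p1
      · rw [hs1, hp1, Equiv.swap_apply_right]; simp [hz0]
      · rw [hs1, Equiv.swap_apply_of_ne_of_ne hbz0 hp1]

lemma my_plprob_nonneg {ι : Type*} [DecidableEq ι] (θ : ι → ℝ) (S : Finset ι)
    (σ : Ranking S) : 0 ≤ PLProb θ S σ :=
  Finset.prod_nonneg fun a _ => div_nonneg (Real.exp_pos _).le
    (Finset.sum_nonneg fun _ _ => (Real.exp_pos _).le)

lemma my_denom_pos {ι : Type*} [DecidableEq ι] (θ : ι → ℝ) (S : Finset ι)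
    (σ : Ranking S) (a : Fin S.card) :
    0 < ∑ a' ∈ Finset.univ.filter (fun a' => a ≤ a'), Real.exp (θ (σ a').1) :=
  Finset.sum_pos (fun _ _ => Real.exp_pos _)
    ⟨a, by simp⟩

lemma my_compare {ι : Type*} [DecidableEq ι] (θ : ι → ℝ) (S : Finset ι)
    (hκ : 1 < S.card) (τ : Equiv.Perm (Fin S.card))
    (hτ : ∀ b : Fin S.card, 2 ≤ b.val → (τ b).val ≤ b.val) (σ : Ranking S)
    (h0 : ∀ b, θ (σ ⟨0, by omega⟩).1 ≤ θ (σ b).1)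
    (h1 : ∀ b : Fin S.card, 2 ≤ b.val → θ (σ ⟨1, hκ⟩).1 ≤ θ (σ b).1) :
    PLProb θ S σ ≤ PLProb θ S (τ.symm.trans σ) := by
  classical
  rw [PLProb, PLProb, Finset.prod_div_distrib, Finset.prod_div_distrib]
  have hnum : ∏ a, Real.exp (θ ((τ.symm.trans σ) a).1) = ∏ a, Real.exp (θ (σ a).1) :=
    Equiv.prod_comp τ.symm (fun a => Real.exp (θ (σ a).1))
  rw [hnum]
  have hterm : ∀ a : Fin S.card,
      ∑ a' ∈ Finset.univ.filter (fun a' => a ≤ a'), Real.exp (θ ((τ.symm.trans σ) a').1)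
        ≤ ∑ a' ∈ Finset.univ.filter (fun a' => a ≤ a'), Real.exp (θ (σ a').1) := by
    intro a
    have hre : ∑ a' ∈ Finset.univ.filter (fun a' => a ≤ a'),
        Real.exp (θ ((τ.symm.trans σ) a').1)
        = ∑ b ∈ Finset.univ.filter (fun b => a ≤ τ b), Real.exp (θ (σ b).1) := by
      refine (Finset.sum_equiv τ (fun b => ?_) (fun b _ => ?_)).symm
      · simp
      · simp
    rw [hre]
    exact my_key_sum hκ τ hτ (fun b => Real.exp (θ (σ b).1))
      (fun b => Real.exp_le_exp.mpr (h0 b))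
      (fun b hb => Real.exp_le_exp.mpr (h1 b hb)) a
  have hpos' : 0 < ∏ a : Fin S.card, ∑ a' ∈ Finset.univ.filter (fun a' => a ≤ a'),
      Real.exp (θ ((τ.symm.trans σ) a').1) :=
    Finset.prod_pos fun a _ => my_denom_pos θ S _ a
  have hprod : ∏ a : Fin S.card, (∑ a' ∈ Finset.univ.filter (fun a' => a ≤ a'),
      Real.exp (θ ((τ.symm.trans σ) a').1))
      ≤ ∏ a : Fin S.card, ∑ a' ∈ Finset.univ.filter (fun a' => a ≤ a'),
      Real.exp (θ (σ a').1) :=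
    Finset.prod_le_prod (fun a _ => (my_denom_pos θ S _ a).le) (fun a _ => hterm a)
  have hN : 0 ≤ ∏ a, Real.exp (θ (σ a).1) :=
    Finset.prod_nonneg fun _ _ => (Real.exp_pos _).le
  gcongr

lemma my_event_eq {ι : Type*} [DecidableEq ι] (θ : ι → ℝ) (S : Finset ι)
    (E : Ranking S → Prop) [DecidablePred E] :
    PLprobEvent θ S E = ∑ σ ∈ Finset.univ.filter E, PLProb θ S σ := by
  rw [PLprobEvent, Finset.sum_filter]
  exact Finset.sum_congr rfl fun σ _ => by split_ifs <;> first | rfl | tauto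

end myauxx

set_option maxHeartbeats 2000000 in
theorem statement_17 {ι : Type*} [DecidableEq ι]
    (θ : ι → ℝ) (S : Finset ι)
    (imin1 imin2 : ι) (h1 : imin1 ∈ S) (h2 : imin2 ∈ S) (hne : imin1 ≠ imin2)
    (hmin1 : ∀ i ∈ S, θ imin1 ≤ θ i)
    (hmin2 : ∀ i ∈ S, i ≠ imin1 → θ imin2 ≤ θ i)
    (i1 i2 : ℕ) (hi1 : 1 ≤ i1) (hi1' : i1 ≤ S.card)
    (hi2 : 1 ≤ i2) (hi2' : i2 ≤ S.card) (h12 : i1 ≠ i2) :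
    PLprobEvent θ S (fun σ => rankOf σ ⟨imin1, h1⟩ = 1 ∧ rankOf σ ⟨imin2, h2⟩ = 2) ≤
      PLprobEvent θ S (fun σ => rankOf σ ⟨imin1, h1⟩ = i1 ∧ rankOf σ ⟨imin2, h2⟩ = i2) := by
  classical
  have hκ : 1 < S.card := by omega
  set z0 : Fin S.card := ⟨0, by omega⟩ with hz0
  set z1 : Fin S.card := ⟨1, hκ⟩ with hz1
  set m1 : {x // x ∈ S} := ⟨imin1, h1⟩ with hm1
  set m2 : {x // x ∈ S} := ⟨imin2, h2⟩ with hm2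
  set p1 : Fin S.card := ⟨i1 - 1, by omega⟩ with hp1
  set p2 : Fin S.card := ⟨i2 - 1, by omega⟩ with hp2
  have hp : p1 ≠ p2 := by
    intro h; rw [Fin.ext_iff] at h; simp only [hp1, hp2] at h; omega
  obtain ⟨τ, hτ0, hτ1, hτle⟩ := my_tau_exists hκ p1 p2 hp
  set f : Ranking S → Ranking S := fun σ => τ.symm.trans σ with hf
  rw [my_event_eq, my_event_eq]
  set F1 : Finset (Ranking S) := Finset.univ.filter
    (fun σ => rankOf σ m1 = 1 ∧ rankOf σ m2 = 2) with hF1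
  set F2 : Finset (Ranking S) := Finset.univ.filter
    (fun σ => rankOf σ m1 = i1 ∧ rankOf σ m2 = i2) with hF2
  -- facts about members of F1
  have hmemF1 : ∀ σ ∈ F1, σ z0 = m1 ∧ σ z1 = m2 := by
    intro σ hσ
    rw [hF1, Finset.mem_filter] at hσ
    obtain ⟨-, hr1, hr2⟩ := hσ
    rw [rankOf] at hr1 hr2
    have e1 : σ.symm m1 = z0 := by
      apply Fin.ext; rw [hz0]; show (σ.symm m1).val = 0; omega
    have e2 : σ.symm m2 = z1 := by
      apply Fin.ext; rw [hz1]; show (σ.symm m2).val = 1; omega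
    constructor
    · rw [← e1, Equiv.apply_symm_apply]
    · rw [← e2, Equiv.apply_symm_apply]
  have step1 : ∑ σ ∈ F1, PLProb θ S σ ≤ ∑ σ ∈ F1, PLProb θ S (f σ) := by
    refine Finset.sum_le_sum fun σ hσ => ?_
    obtain ⟨e1, e2⟩ := hmemF1 σ hσ
    refine my_compare θ S hκ τ hτle σ (fun b => ?_) (fun b hb => ?_)
    · show θ (σ z0).1 ≤ _
      rw [e1]
      exact hmin1 _ (σ b).2
    · show θ (σ z1).1 ≤ _
      rw [e2]
      refine hmin2 _ (σ b).2 fun hc => ?_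
      have : σ b = m1 := Subtype.ext hc
      rw [← e1] at this
      have hb0 := σ.injective this
      rw [hb0, hz0] at hb
      simp at hb
  have hinj : ∀ σ ∈ F1, ∀ σ' ∈ F1, f σ = f σ' → σ = σ' := by
    intro σ _ σ' _ h
    ext a
    have h2 : σ a = σ' a := by
      have := congrArg (fun e : Ranking S => e (τ a)) h
      simpa [hf] using this
    rw [h2]
  have step2 : ∑ σ ∈ F1, PLProb θ S (f σ) = ∑ σ ∈ F1.image f, PLProb θ S σ :=
    (Finset.sum_image hinj).symm
  have hsubF2 : F1.image f ⊆ F2 := by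
    intro σ' hσ'
    rw [Finset.mem_image] at hσ'
    obtain ⟨σ, hσ, rfl⟩ := hσ'
    obtain ⟨e1, e2⟩ := hmemF1 σ hσ
    rw [hF2, Finset.mem_filter]
    refine ⟨Finset.mem_univ _, ?_, ?_⟩
    · rw [rankOf]
      have : (f σ).symm m1 = p1 := by
        rw [hf]
        show (τ.symm.trans σ).symm m1 = p1
        rw [Equiv.symm_trans_apply, Equiv.symm_symm, ← e1, Equiv.symm_apply_apply, hτ0]
      rw [this, hp1]
      show i1 - 1 + 1 = i1
      omega
    · rw [rankOf]
      have : (f σ).symm m2 = p2 := by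
        rw [hf]
        show (τ.symm.trans σ).symm m2 = p2
        rw [Equiv.symm_trans_apply, Equiv.symm_symm, ← e2, Equiv.symm_apply_apply, hτ1]
      rw [this, hp2]
      show i2 - 1 + 1 = i2
      omega
  have step3 : ∑ σ ∈ F1.image f, PLProb θ S σ ≤ ∑ σ ∈ F2, PLProb θ S σ :=
    Finset.sum_le_sum_of_subset_of_nonneg hsubF2
      (fun σ _ _ => my_plprob_nonneg θ S σ)
  calc ∑ σ ∈ F1, PLProb θ S σ ≤ ∑ σ ∈ F1, PLProb θ S (f σ) := step1
    _ = ∑ σ ∈ F1.image f, PLProb θ S σ := step2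
    _ ≤ ∑ σ ∈ F2, PLProb θ S σ := step3
end
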